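/- arXiv:2512.07550 — 6 statements merged into one kernel-verified Lean document; each statement's English description precedes it below -/
import Mathlib

section
/- Strong duality for finite Wasserstein distributionally robust linear objectives: let X be a finite set, d a metric on X, P a probability vector on X, v : X → ℝ any function, and δ ≥ 0. Then sup over all probability vectors Q on X with W(Q,P) ≤ δ of Σ_{y∈X} v(y) Q(y) equals inf over λ ≥ 0 of [ λδ + Σ_{y∈X} ( max_{l∈X} ( −λ d(l,y) + v(l) ) ) P(y) ]. -/
open Finset

/-- A probability vector on a finite set `X`. -/
def IsProbVec {X : Type*} [Fintype X] (μ : X → ℝ) : Prop :=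
  (∀ x, 0 ≤ μ x) ∧ ∑ x, μ x = 1

/-- A coupling of two probability vectors on a finite set `X`. -/
def IsCoupling {X : Type*} [Fintype X] (μ ν : X → ℝ) (Γ : X × X → ℝ) : Prop :=
  (∀ p, 0 ≤ Γ p) ∧ (∀ y, ∑ z, Γ (y, z) = μ y) ∧ (∀ z, ∑ y, Γ (y, z) = ν z)

/-- `d` is a metric on `X`. -/
def IsMetricOn {X : Type*} (d : X → X → ℝ) : Prop :=
  (∀ x y, 0 ≤ d x y) ∧ (∀ x y, d x y = 0 ↔ x = y) ∧ (∀ x y, d x y = d y x) ∧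
    (∀ x y z, d x z ≤ d x y + d y z)

/-- The 1-Wasserstein distance between probability vectors on a finite set. -/
noncomputable def Wass {X : Type*} [Fintype X] (d : X → X → ℝ) (μ ν : X → ℝ) : ℝ :=
  sInf {c | ∃ Γ : X × X → ℝ, IsCoupling μ ν Γ ∧ c = ∑ p : X × X, Γ p * d p.1 p.2}

/-!
Weak duality is the Lagrangian bound `v l ≤ λ d(l, y) + m_λ(y)`, with
`m_λ(y) = max_l (v l - λ d(l, y))`, integrated against any coupling of `Q` and `P`.

For strong duality let `D₋(λ) ≤ D₊(λ)` (`minCost`, `maxCost`) be the `P`-averages of the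
smallest and the largest distance `d(l, y)` over the maximisers `l` of `m_λ(y)`. Maximisers at
`λ'` near `λ` are maximisers at `λ`, so `D₋` is lower semicontinuous and `D₋(λ') ≤ D₊(λ)` for
`λ'` near `λ`. Hence `λ* = inf {λ ≥ 0 | D₋(λ) ≤ δ}` has `D₋(λ*) ≤ δ` and, if `λ* > 0`,
`δ ≤ D₊(λ*)`. A convex combination of the two transport maps realising `D₋(λ*)` and `D₊(λ*)`
is then a plan supported on maximisers with complementary slackness `λ* · cost = λ* · δ`, so its
value is the dual objective at `λ*`.
-/

open Filter Topology

lemma eventually_forall_le_imp_forall_le {ι α β : Type*} [Finite ι] [TopologicalSpace α]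
    [LinearOrder β] [TopologicalSpace β] [OrderClosedTopology β] {f : ι → α → β}
    (hf : ∀ i, Continuous (f i)) (x : α) :
    ∀ᶠ x' in 𝓝 x, ∀ i, (∀ j, f j x' ≤ f i x') → ∀ j, f j x ≤ f i x := by
  refine eventually_all.2 fun i => ?_
  by_cases hi : ∀ j, f j x ≤ f i x
  · exact Eventually.of_forall fun _ _ => hi
  · obtain ⟨j, hj⟩ := not_forall.1 hi
    filter_upwards [(hf i).continuousAt.eventually_lt (hf j).continuousAt (not_le.1 hj)]
      with x' hx' hmax
    exact absurd (hmax j) (not_le.2 hx')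

lemma csSup_eq_csInf_of_forall_le_of_mem {α : Type*} [ConditionallyCompleteLattice α]
    {s t : Set α} {a : α} (h : ∀ x ∈ s, ∀ y ∈ t, x ≤ y) (has : a ∈ s) (hat : a ∈ t) :
    sSup s = sInf t := by
  rw [IsGreatest.csSup_eq ⟨has, fun x hx => h x hx a hat⟩,
    IsLeast.csInf_eq ⟨hat, fun y hy => h a has y hy⟩]

lemma exists_mix_weights {a b δ lam : ℝ} (ha : a ≤ δ) (hb : lam = 0 ∨ δ ≤ b) :
    ∃ s t : ℝ, 0 ≤ s ∧ 0 ≤ t ∧ s + t = 1 ∧ s * a + t * b ≤ δ ∧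
      lam * (s * a + t * b) = lam * δ := by
  rcases hb with rfl | hb
  · exact ⟨1, 0, zero_le_one, le_rfl, add_zero 1, by simpa using ha, by simp⟩
  · obtain ⟨s, t, hs, ht, hst, h⟩ : δ ∈ segment ℝ a b := by
      rw [segment_eq_Icc (ha.trans hb)]; exact ⟨ha, hb⟩
    simp only [smul_eq_mul] at h
    exact ⟨s, t, hs, ht, hst, h.le, by rw [h]⟩

section Coupling

variable {X : Type*} [Fintype X]

def transportCost (d : X → X → ℝ) (Γ : X × X → ℝ) : ℝ :=
  ∑ p : X × X, Γ p * d p.1 p.2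

lemma sum_mul_fst_of_isCoupling {μ ν : X → ℝ} {Γ : X × X → ℝ} (hΓ : IsCoupling μ ν Γ)
    (f : X → ℝ) : ∑ p : X × X, Γ p * f p.1 = ∑ x, f x * μ x := by
  simp_rw [Fintype.sum_prod_type, ← hΓ.2.1, Finset.mul_sum, mul_comm]

lemma sum_mul_snd_of_isCoupling {μ ν : X → ℝ} {Γ : X × X → ℝ} (hΓ : IsCoupling μ ν Γ)
    (f : X → ℝ) : ∑ p : X × X, Γ p * f p.2 = ∑ x, f x * ν x := by
  simp_rw [Fintype.sum_prod_type_right, ← hΓ.2.2, Finset.mul_sum, mul_comm]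

lemma isProbVec_of_isCoupling {μ ν : X → ℝ} {Γ : X × X → ℝ} (hν : IsProbVec ν)
    (hΓ : IsCoupling μ ν Γ) : IsProbVec μ := by
  refine ⟨fun x => hΓ.2.1 x ▸ Finset.sum_nonneg fun z _ => hΓ.1 (x, z), ?_⟩
  have hmass := (sum_mul_fst_of_isCoupling hΓ fun _ => 1).symm.trans
    (sum_mul_snd_of_isCoupling hΓ fun _ => 1)
  simpa [hν.2] using hmass

lemma isCoupling_mul {μ ν : X → ℝ} (hμ : IsProbVec μ) (hν : IsProbVec ν) :
    IsCoupling μ ν fun p => μ p.1 * ν p.2 :=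
  ⟨fun p => mul_nonneg (hμ.1 p.1) (hν.1 p.2),
    fun y => by dsimp only; rw [← Finset.mul_sum, hν.2, mul_one],
    fun z => by dsimp only; rw [← Finset.sum_mul, hμ.2, one_mul]⟩

lemma wass_le_transportCost {d : X → X → ℝ} (hd0 : ∀ x y, 0 ≤ d x y) {μ ν : X → ℝ}
    {Γ : X × X → ℝ} (hΓ : IsCoupling μ ν Γ) : Wass d μ ν ≤ transportCost d Γ := by
  refine csInf_le ⟨0, ?_⟩ ⟨Γ, hΓ, rfl⟩
  rintro c ⟨Γ', hΓ', rfl⟩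
  exact Finset.sum_nonneg fun p _ => mul_nonneg (hΓ'.1 p) (hd0 p.1 p.2)

end Coupling

section MixPlan

variable {X : Type*} [DecidableEq X]

def mixPlan (P : X → ℝ) (s t : ℝ) (f g : X → X) (p : X × X) : ℝ :=
  P p.2 * (s * (if p.1 = f p.2 then 1 else 0) + t * (if p.1 = g p.2 then 1 else 0))

variable {P : X → ℝ} {s t : ℝ} {f g : X → X}

lemma mixPlan_ne_zero {p : X × X} (hp : mixPlan P s t f g p ≠ 0) :
    p.1 = f p.2 ∨ p.1 = g p.2 := by
  by_contra! h
  simp [mixPlan, h.1, h.2] at hp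

variable [Fintype X]

lemma sum_mixPlan_mul (c : X → X → ℝ) (y : X) :
    ∑ l, mixPlan P s t f g (l, y) * c l y = P y * (s * c (f y) y + t * c (g y) y) := by
  simp [mixPlan, mul_add, add_mul, sum_add_distrib, mul_assoc]

lemma isCoupling_mixPlan (hP0 : ∀ y, 0 ≤ P y) (hs : 0 ≤ s) (ht : 0 ≤ t) (hst : s + t = 1) :
    IsCoupling (fun l => ∑ y, mixPlan P s t f g (l, y)) P (mixPlan P s t f g) := by
  refine ⟨fun p => mul_nonneg (hP0 _) (add_nonneg ?_ ?_), fun _ => rfl, fun y => ?_⟩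
  · exact mul_nonneg hs (by split_ifs <;> norm_num)
  · exact mul_nonneg ht (by split_ifs <;> norm_num)
  · simpa [hst] using
      sum_mixPlan_mul (P := P) (s := s) (t := t) (f := f) (g := g) (fun _ _ => 1) y

lemma transportCost_mixPlan (d : X → X → ℝ) :
    transportCost d (mixPlan P s t f g) = ∑ y, P y * (s * d (f y) y + t * d (g y) y) := by
  rw [transportCost, Fintype.sum_prod_type_right]
  exact sum_congr rfl fun y _ => sum_mixPlan_mul d y

end MixPlan

noncomputable section Dual

variable {X : Type*} [Fintype X] (d : X → X → ℝ) (v : X → ℝ)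

def argmaxSet (lam : ℝ) (y : X) : Finset X :=
  univ.filter fun l => ∀ j, -lam * d j y + v j ≤ -lam * d l y + v l

lemma eventually_argmaxSet_subset (lam : ℝ) :
    ∀ᶠ lam' in 𝓝 lam, ∀ y, argmaxSet d v lam' y ⊆ argmaxSet d v lam y := by
  refine eventually_all.2 fun y => ?_
  filter_upwards [eventually_forall_le_imp_forall_le
    (f := fun l lam => -lam * d l y + v l) (fun l => by fun_prop) lam] with lam' h l hl
  exact mem_filter.2 ⟨mem_univ l, h l (mem_filter.1 hl).2⟩

variable [Nonempty X]

def penalizedSup (lam : ℝ) (y : X) : ℝ :=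
  univ.sup' univ_nonempty fun l => -lam * d l y + v l

variable {d v}

lemma le_penalizedSup (lam : ℝ) (l y : X) : -lam * d l y + v l ≤ penalizedSup d v lam y :=
  le_sup' (fun l => -lam * d l y + v l) (mem_univ l)

lemma penalizedSup_eq_of_mem_argmaxSet {lam : ℝ} {l y : X} (hl : l ∈ argmaxSet d v lam y) :
    penalizedSup d v lam y = -lam * d l y + v l :=
  (sup'_le _ _ fun j _ => (mem_filter.1 hl).2 j).antisymm (le_penalizedSup lam l y)

variable (d v)

lemma argmaxSet_nonempty (lam : ℝ) (y : X) : (argmaxSet d v lam y).Nonempty := by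
  obtain ⟨l, -, hl⟩ := exists_max_image univ (fun l => -lam * d l y + v l) univ_nonempty
  exact ⟨l, mem_filter.2 ⟨mem_univ l, fun j => hl j (mem_univ j)⟩⟩

def minDist (lam : ℝ) (y : X) : ℝ :=
  (argmaxSet d v lam y).inf' (argmaxSet_nonempty d v lam y) fun l => d l y

def maxDist (lam : ℝ) (y : X) : ℝ :=
  (argmaxSet d v lam y).sup' (argmaxSet_nonempty d v lam y) fun l => d l y

lemma exists_mem_argmaxSet_eq_minDist (lam : ℝ) (y : X) :
    ∃ l ∈ argmaxSet d v lam y, minDist d v lam y = d l y :=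
  exists_mem_eq_inf' _ _

lemma exists_mem_argmaxSet_eq_maxDist (lam : ℝ) (y : X) :
    ∃ l ∈ argmaxSet d v lam y, maxDist d v lam y = d l y :=
  exists_mem_eq_sup' _ _

variable {d v}

lemma sum_mul_eq_lagrangian {μ P : X → ℝ} {Γ : X × X → ℝ} (hΓ : IsCoupling μ P Γ) (lam : ℝ) :
    ∑ l, v l * μ l = lam * transportCost d Γ + ∑ y, penalizedSup d v lam y * P y -
      ∑ p : X × X, Γ p * (penalizedSup d v lam p.2 - (-lam * d p.1 p.2 + v p.1)) := by
  rw [← sum_mul_fst_of_isCoupling hΓ, ← sum_mul_snd_of_isCoupling hΓ, transportCost,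
    Finset.mul_sum, ← Finset.sum_add_distrib, ← Finset.sum_sub_distrib]
  exact Finset.sum_congr rfl fun p _ => by ring

lemma sum_mul_le_lagrangian {μ P : X → ℝ} {Γ : X × X → ℝ} (hΓ : IsCoupling μ P Γ) (lam : ℝ) :
    ∑ l, v l * μ l ≤ lam * transportCost d Γ + ∑ y, penalizedSup d v lam y * P y := by
  rw [sum_mul_eq_lagrangian hΓ lam, sub_le_self_iff]
  exact Finset.sum_nonneg fun p _ =>
    mul_nonneg (hΓ.1 p) (sub_nonneg.2 (le_penalizedSup lam p.1 p.2))

lemma sum_mul_eq_lagrangian_of_support {μ P : X → ℝ} {Γ : X × X → ℝ} (hΓ : IsCoupling μ P Γ)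
    {lam : ℝ} (hsupp : ∀ p, Γ p ≠ 0 → p.1 ∈ argmaxSet d v lam p.2) :
    ∑ l, v l * μ l = lam * transportCost d Γ + ∑ y, penalizedSup d v lam y * P y := by
  rw [sum_mul_eq_lagrangian hΓ lam, sub_eq_self]
  refine Finset.sum_eq_zero fun p _ => ?_
  by_cases hp : Γ p = 0
  · rw [hp, zero_mul]
  · rw [penalizedSup_eq_of_mem_argmaxSet (hsupp p hp), sub_self, mul_zero]

lemma sum_mul_le_dual {P Q : X → ℝ} (hP : IsProbVec P) (hQ : IsProbVec Q) {δ : ℝ}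
    (hW : Wass d Q P ≤ δ) {lam : ℝ} (hlam : 0 ≤ lam) :
    ∑ y, v y * Q y ≤ lam * δ + ∑ y, penalizedSup d v lam y * P y := by
  have hprod := isCoupling_mul hQ hP
  rcases hlam.eq_or_lt with rfl | hlam
  · simpa using sum_mul_le_lagrangian (d := d) (v := v) hprod 0
  suffices (∑ y, v y * Q y - ∑ y, penalizedSup d v lam y * P y) / lam ≤ δ by
    rw [div_le_iff₀' hlam] at this
    linarith
  rw [Wass] at hW
  refine le_trans (le_csInf ?_ ?_) hW
  · exact ⟨_, _, hprod, rfl⟩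
  · rintro c ⟨Γ, hΓ, rfl⟩
    rw [div_le_iff₀' hlam, sub_le_iff_le_add]
    exact sum_mul_le_lagrangian hΓ lam

variable (d v)

lemma eventually_minDist_le (lam : ℝ) :
    ∀ᶠ lam' in 𝓝 lam, ∀ y, minDist d v lam y ≤ minDist d v lam' y ∧
      minDist d v lam' y ≤ maxDist d v lam y := by
  filter_upwards [eventually_argmaxSet_subset d v lam] with lam' h y
  obtain ⟨l, hl⟩ := argmaxSet_nonempty d v lam' y
  exact ⟨inf'_mono _ (h y) _,
    (inf'_le _ hl).trans ((le_sup' (fun l => d l y) hl).trans (sup'_mono _ (h y) _))⟩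

variable {P : X → ℝ}

variable (P) in
def minCost (lam : ℝ) : ℝ := ∑ y, minDist d v lam y * P y

variable (P) in
def maxCost (lam : ℝ) : ℝ := ∑ y, maxDist d v lam y * P y

lemma eventually_minCost_le (hP0 : ∀ y, 0 ≤ P y) (lam : ℝ) :
    ∀ᶠ lam' in 𝓝 lam, minCost d v P lam ≤ minCost d v P lam' ∧
      minCost d v P lam' ≤ maxCost d v P lam := by
  filter_upwards [eventually_minDist_le d v lam] with lam' h
  exact ⟨sum_le_sum fun y _ => mul_le_mul_of_nonneg_right (h y).1 (hP0 y),
    sum_le_sum fun y _ => mul_le_mul_of_nonneg_right (h y).2 (hP0 y)⟩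

lemma lowerSemicontinuous_minCost (hP0 : ∀ y, 0 ≤ P y) :
    LowerSemicontinuous (minCost d v P) := fun lam _ hc =>
  (eventually_minCost_le d v hP0 lam).mono fun _ h => hc.trans_le h.1

variable {d v}

lemma exists_minCost_nonpos (hdiag : ∀ x, d x x = 0) (hpos : ∀ x y, x ≠ y → 0 < d x y)
    (hP0 : ∀ y, 0 ≤ P y) : ∃ lam, 0 ≤ lam ∧ minCost d v P lam ≤ 0 := by
  have hlarge : ∀ᶠ lam in atTop, 0 ≤ lam ∧ ∀ y, y ∈ argmaxSet d v lam y := by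
    refine (eventually_ge_atTop 0).and (eventually_all.2 fun y => ?_)
    have hgain : ∀ᶠ lam in atTop, ∀ j, v j - v y ≤ lam * d j y := eventually_all.2 fun j => by
      rcases eq_or_ne j y with rfl | hj
      · exact Eventually.of_forall fun lam => by simp [hdiag]
      · exact (tendsto_id.atTop_mul_const (hpos j y hj)).eventually_ge_atTop _
    filter_upwards [hgain] with lam h
    exact mem_filter.2 ⟨mem_univ y, fun j => by rw [hdiag, mul_zero, zero_add]; linarith [h j]⟩
  obtain ⟨lam, hlam0, hmem⟩ := hlarge.exists
  refine ⟨lam, hlam0, sum_nonpos fun y _ => mul_nonpos_of_nonpos_of_nonneg ?_ (hP0 y)⟩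
  exact (inf'_le _ (hmem y)).trans (hdiag y).le

lemma exists_optimal_multiplier (hdiag : ∀ x, d x x = 0) (hpos : ∀ x y, x ≠ y → 0 < d x y)
    (hP0 : ∀ y, 0 ≤ P y) {δ : ℝ} (hδ : 0 ≤ δ) :
    ∃ lam, 0 ≤ lam ∧ minCost d v P lam ≤ δ ∧ (lam = 0 ∨ δ ≤ maxCost d v P lam) := by
  set T := {lam | 0 ≤ lam ∧ minCost d v P lam ≤ δ}
  have hT : IsClosed T :=
    isClosed_Ici.inter ((lowerSemicontinuous_minCost d v hP0).isClosed_preimage δ)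
  obtain ⟨lam0, hlam0, hcost0⟩ := exists_minCost_nonpos (v := v) hdiag hpos hP0
  have hbdd : BddBelow T := ⟨0, fun _ h => h.1⟩
  obtain ⟨hS0, hSmin⟩ := hT.csInf_mem ⟨lam0, hlam0, hcost0.trans hδ⟩ hbdd
  refine ⟨sInf T, hS0, hSmin, hS0.eq_or_lt.imp Eq.symm fun hSpos => ?_⟩
  have hleft : ∀ᶠ lam in 𝓝[<] sInf T,
      lam < sInf T ∧ 0 < lam ∧ minCost d v P lam ≤ maxCost d v P (sInf T) :=
    (eventually_nhdsWithin_of_forall fun _ h => h).and (nhdsWithin_le_nhds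
      ((lt_mem_nhds hSpos).and ((eventually_minCost_le d v hP0 _).mono fun _ h => h.2)))
  obtain ⟨lam, hlt, hlam, hle⟩ := hleft.exists
  have hnotT : lam ∉ T := fun h => hlt.not_ge (csInf_le hbdd h)
  have : δ < minCost d v P lam := by simpa [T, hlam.le] using hnotT
  linarith

end Dual

section Primal

variable {X : Type*} [Fintype X] [Nonempty X] {d : X → X → ℝ} {v P : X → ℝ}

lemma exists_isProbVec_wass_le_sum_mul_eq (hd0 : ∀ x y, 0 ≤ d x y) (hP : IsProbVec P)
    {δ lam : ℝ} (hmin : minCost d v P lam ≤ δ) (hmax : lam = 0 ∨ δ ≤ maxCost d v P lam) :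
    ∃ Q, IsProbVec Q ∧ Wass d Q P ≤ δ ∧
      ∑ y, v y * Q y = lam * δ + ∑ y, penalizedSup d v lam y * P y := by
  classical
  choose f hf hfd using exists_mem_argmaxSet_eq_minDist d v lam
  choose g hg hgd using exists_mem_argmaxSet_eq_maxDist d v lam
  obtain ⟨s, t, hs, ht, hst, hcost, hslack⟩ := exists_mix_weights hmin hmax
  have hΓ := isCoupling_mixPlan (f := f) (g := g) hP.1 hs ht hst
  have hcostΓ : transportCost d (mixPlan P s t f g) =
      s * minCost d v P lam + t * maxCost d v P lam := by
    rw [transportCost_mixPlan, minCost, maxCost, mul_sum, mul_sum, ← sum_add_distrib]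
    exact sum_congr rfl fun y _ => by rw [hfd, hgd]; ring
  refine ⟨_, isProbVec_of_isCoupling hP hΓ,
    (wass_le_transportCost hd0 hΓ).trans (hcostΓ ▸ hcost), ?_⟩
  rw [sum_mul_eq_lagrangian_of_support hΓ, hcostΓ, hslack]
  intro p hp
  rcases mixPlan_ne_zero hp with h | h <;> rw [h]
  exacts [hf _, hg _]

end Primal

/-- Strong duality for finite Wasserstein distributionally robust linear objectives. -/
theorem wasserstein_dro_strong_duality
    {X : Type*} [Fintype X] [Nonempty X]
    (d : X → X → ℝ) (hd : IsMetricOn d)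
    (P : X → ℝ) (hP : IsProbVec P) (v : X → ℝ) (δ : ℝ) (hδ : 0 ≤ δ) :
    sSup {s | ∃ Q : X → ℝ, IsProbVec Q ∧ Wass d Q P ≤ δ ∧ s = ∑ y, v y * Q y} =
      sInf {s | ∃ lam : ℝ, 0 ≤ lam ∧
        s = lam * δ +
          ∑ y, (Finset.univ.sup' Finset.univ_nonempty fun l => -lam * d l y + v l) * P y} := by
  obtain ⟨hd0, hd_eq, -, -⟩ := hd
  have hdiag : ∀ x, d x x = 0 := fun x => (hd_eq x x).2 rfl
  have hpos : ∀ x y, x ≠ y → 0 < d x y := fun x y hxy =>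
    (hd0 x y).lt_of_ne' (mt (hd_eq x y).1 hxy)
  obtain ⟨lam, hlam0, hmin, hmax⟩ := exists_optimal_multiplier (v := v) hdiag hpos hP.1 hδ
  obtain ⟨Q, hQ, hW, hval⟩ := exists_isProbVec_wass_le_sum_mul_eq hd0 hP hmin hmax
  refine csSup_eq_csInf_of_forall_le_of_mem ?_ ⟨Q, hQ, hW, hval.symm⟩ ⟨lam, hlam0, rfl⟩
  rintro _ ⟨Q', hQ', hW', rfl⟩ _ ⟨lam', hlam', rfl⟩
  exact sum_mul_le_dual hP hQ' hW' hlam'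
end

section
/- Kantorovich duality on a finite space: let X be a finite set, d a metric on X, and μ, ν probability vectors on X. Then W(μ,ν) = sup over all pairs of functions f, g : X → ℝ satisfying f(z₁) + g(z₂) ≤ d(z₁,z₂) for all z₁, z₂ ∈ X of Σ_{y∈X} f(y) μ(y) + Σ_{z∈X} g(z) ν(z). -/
open Finset

/-!
Weak duality is the constraint `f z₁ + g z₂ ≤ c z₁ z₂` summed against a coupling. For the converse,
send the standard simplex on `X × X` linearly to (first marginal, second marginal, cost); the image
is compact and convex, and if `w` lies below the cost of every coupling it misses `(μ, ν, w)`.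
A separating functional `(F, G, T)` has `T < 0`, as the product coupling shows, and dividing by
`-T` turns it into admissible potentials whose dual value exceeds `w`.
-/

open LinearMap in
theorem LinearMap.apply_prod_pi_eq_sum {R ι κ : Type*} [CommSemiring R] [Fintype ι] [Fintype κ]
    [DecidableEq ι] [DecidableEq κ] (φ : (ι → R) × (κ → R) × R →ₗ[R] R) (a : ι → R)
    (b : κ → R) (t : R) :
    φ (a, b, t) = ∑ i, a i * φ (Pi.single i 1, 0, 0) + ∑ j, b j * φ (0, Pi.single j 1, 0) +
      t * φ (0, 0, 1) := by
  have hsplit : (a, b, t) = inl R _ _ (∑ i, a i • Pi.single i 1) +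
      inr R _ _ (inl R _ _ (∑ j, b j • Pi.single j 1)) + t • (0, 0, 1) := by
    simp only [← Pi.single_smul', smul_eq_mul, mul_one, Finset.univ_sum_single]
    ext <;> simp
  rw [hsplit]
  simp only [map_add, map_sum, map_smul, inl_apply, inr_apply, smul_eq_mul, Prod.mk_zero_zero]

section Transport

variable {X : Type*} [Fintype X] {μ ν : X → ℝ} {Γ : X × X → ℝ}

theorem isCoupling_product (hμ : IsProbVec μ) (hν : IsProbVec ν) :
    IsCoupling μ ν fun p => μ p.1 * ν p.2 :=
  ⟨fun p => mul_nonneg (hμ.1 p.1) (hν.1 p.2),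
    fun y => by simp only [← Finset.mul_sum, hν.2, mul_one],
    fun z => by simp only [← Finset.sum_mul, hμ.2, one_mul]⟩

theorem IsCoupling.mem_stdSimplex (hΓ : IsCoupling μ ν Γ) (hμ : ∑ x, μ x = 1) :
    Γ ∈ stdSimplex ℝ (X × X) :=
  ⟨hΓ.1, by rw [Fintype.sum_prod_type, ← hμ]; exact Finset.sum_congr rfl fun y _ => hΓ.2.1 y⟩

theorem IsCoupling.sum_potentials_le_cost (hΓ : IsCoupling μ ν Γ) {c : X → X → ℝ}
    {f g : X → ℝ} (hfg : ∀ z₁ z₂, f z₁ + g z₂ ≤ c z₁ z₂) :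
    ∑ y, f y * μ y + ∑ z, g z * ν z ≤ ∑ p, Γ p * c p.1 p.2 := by
  have hf : ∑ y, f y * μ y = ∑ p : X × X, f p.1 * Γ p := by
    simp only [← hΓ.2.1, Finset.mul_sum, Fintype.sum_prod_type]
  have hg : ∑ z, g z * ν z = ∑ p : X × X, g p.2 * Γ p := by
    simp only [← hΓ.2.2, Finset.mul_sum, Fintype.sum_prod_type_right]
  rw [hf, hg, ← Finset.sum_add_distrib]
  gcongr with p
  rw [← add_mul, mul_comm]
  exact mul_le_mul_of_nonneg_left (hfg p.1 p.2) (hΓ.1 p)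

theorem exists_potentials_le (c : X → X → ℝ) : ∃ f g : X → ℝ, ∀ z₁ z₂, f z₁ + g z₂ ≤ c z₁ z₂ :=
  ⟨fun z₁ => -∑ z, |c z₁ z|, 0, fun z₁ z₂ => by
    have := Finset.single_le_sum (fun z _ => abs_nonneg (c z₁ z)) (Finset.mem_univ z₂)
    simp only [Pi.zero_apply, add_zero]
    linarith [neg_abs_le (c z₁ z₂)]⟩

variable (c : X → X → ℝ)

def marginalsCost : (X × X → ℝ) →ₗ[ℝ] (X → ℝ) × (X → ℝ) × ℝ where
  toFun Γ := (fun y => ∑ z, Γ (y, z), fun z => ∑ y, Γ (y, z), ∑ p, Γ p * c p.1 p.2)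
  map_add' Γ Γ' := by ext <;> simp [Finset.sum_add_distrib, add_mul]
  map_smul' a Γ := by ext <;> simp [Finset.mul_sum, mul_assoc]

theorem marginalsCost_single [DecidableEq X] (p : X × X) :
    marginalsCost c (Pi.single p 1) = (Pi.single p.1 1, Pi.single p.2 1, c p.1 p.2) := by
  refine Prod.ext (funext fun y => ?_) (Prod.ext (funext fun z => ?_) ?_)
  · simp [marginalsCost, Pi.single_apply, Prod.ext_iff, ite_and]
  · simp [marginalsCost, Pi.single_apply, Prod.ext_iff, ite_and]
  · simp [marginalsCost, Pi.single_apply]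

theorem IsCoupling.marginalsCost_eq (hΓ : IsCoupling μ ν Γ) :
    marginalsCost c Γ = (μ, ν, ∑ p, Γ p * c p.1 p.2) :=
  Prod.ext (funext hΓ.2.1) (Prod.ext (funext hΓ.2.2) rfl)

theorem isCoupling_of_marginalsCost_eq {w : ℝ} (hΓ : Γ ∈ stdSimplex ℝ (X × X))
    (h : marginalsCost c Γ = (μ, ν, w)) : IsCoupling μ ν Γ :=
  ⟨hΓ.1, congrFun (congrArg Prod.fst h), congrFun (congrArg (Prod.fst ∘ Prod.snd) h)⟩

theorem exists_potentials_gt_of_lt_cost (hμ : IsProbVec μ) (hν : IsProbVec ν) {w : ℝ}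
    (hw : ∀ Γ, IsCoupling μ ν Γ → w < ∑ p, Γ p * c p.1 p.2) :
    ∃ f g : X → ℝ, (∀ z₁ z₂, f z₁ + g z₂ ≤ c z₁ z₂) ∧ w < ∑ y, f y * μ y + ∑ z, g z * ν z := by
  classical
  have hnot : (μ, ν, w) ∉ marginalsCost c '' stdSimplex ℝ (X × X) := by
    rintro ⟨Γ, hΓ, h⟩
    exact (hw Γ (isCoupling_of_marginalsCost_eq c hΓ h)).ne (congrArg (·.2.2) h).symm
  obtain ⟨φ, u, hφK, hφ⟩ := geometric_hahn_banach_closed_point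
    ((convex_stdSimplex ℝ _).linear_image _)
    ((isCompact_stdSimplex ℝ _).image (marginalsCost c).continuous_of_finiteDimensional).isClosed
    hnot
  set F : X → ℝ := fun y => φ (Pi.single y 1, 0, 0)
  set G : X → ℝ := fun z => φ (0, Pi.single z 1, 0)
  set T : ℝ := φ (0, 0, 1)
  have hφ_eq (a b : X → ℝ) (t : ℝ) : φ (a, b, t) = ∑ y, a y * F y + ∑ z, b z * G z + t * T :=
    (φ : _ →ₗ[ℝ] ℝ).apply_prod_pi_eq_sum a b t
  have hΓ₀ := isCoupling_product hμ hν
  have hφΓ₀ := hφK _ ⟨_, hΓ₀.mem_stdSimplex hμ.2, rfl⟩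
  rw [hΓ₀.marginalsCost_eq, hφ_eq] at hφΓ₀
  rw [hφ_eq] at hφ
  have hT : 0 < -T := by nlinarith [hw _ hΓ₀]
  have hp (p : X × X) : F p.1 + G p.2 + c p.1 p.2 * T < u := by
    have h := hφK _ ⟨_, single_mem_stdSimplex ℝ p, rfl⟩
    simpa [marginalsCost_single, hφ_eq, Pi.single_apply] using h
  refine ⟨fun y => (F y - u) / -T, fun z => G z / -T, fun z₁ z₂ => ?_, ?_⟩
  · rw [← add_div, div_le_iff₀ hT]
    linarith [hp (z₁, z₂)]
  · have hsum : ∑ y, (F y - u) / -T * μ y + ∑ z, G z / -T * ν z =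
        (∑ y, μ y * F y + ∑ z, ν z * G z - u) / -T := by
      simp only [div_mul_eq_mul_div, ← Finset.sum_div, sub_mul, Finset.sum_sub_distrib,
        ← Finset.mul_sum, hμ.2, mul_comm (F _), mul_comm (G _)]
      ring
    rw [hsum, lt_div_iff₀ hT]
    linarith

end Transport

theorem kantorovich_duality_general
    {X : Type*} [Fintype X]
    (d : X → X → ℝ)
    (μ ν : X → ℝ) (hμ : IsProbVec μ) (hν : IsProbVec ν) :
    Wass d μ ν =
      sSup {s | ∃ f g : X → ℝ, (∀ z₁ z₂, f z₁ + g z₂ ≤ d z₁ z₂) ∧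
        s = ∑ y, f y * μ y + ∑ z, g z * ν z} := by
  set D := {s | ∃ f g : X → ℝ, (∀ z₁ z₂, f z₁ + g z₂ ≤ d z₁ z₂) ∧
    s = ∑ y, f y * μ y + ∑ z, g z * ν z}
  have hΓ₀ := isCoupling_product hμ hν
  have hweak : ∀ s ∈ D, ∀ Γ, IsCoupling μ ν Γ → s ≤ ∑ p, Γ p * d p.1 p.2 := by
    rintro s ⟨f, g, hfg, rfl⟩ Γ hΓ
    exact hΓ.sum_potentials_le_cost hfg
  obtain ⟨f₀, g₀, hfg₀⟩ := exists_potentials_le d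
  have hD₀ : _ ∈ D := ⟨f₀, g₀, hfg₀, rfl⟩
  have hP : BddBelow {c | ∃ Γ, IsCoupling μ ν Γ ∧ c = ∑ p, Γ p * d p.1 p.2} :=
    ⟨_, by rintro _ ⟨Γ, hΓ, rfl⟩; exact hweak _ hD₀ Γ hΓ⟩
  refine le_antisymm (le_of_forall_lt fun w hw => ?_)
    (csSup_le ⟨_, hD₀⟩ fun s hs => le_csInf ⟨_, _, hΓ₀, rfl⟩ ?_)
  · obtain ⟨f, g, hfg, hlt⟩ := exists_potentials_gt_of_lt_cost d hμ hν fun Γ hΓ =>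
      hw.trans_le (csInf_le hP ⟨Γ, hΓ, rfl⟩)
    exact hlt.trans_le (le_csSup ⟨_, fun s hs => hweak s hs _ hΓ₀⟩ ⟨f, g, hfg, rfl⟩)
  · rintro _ ⟨Γ, hΓ, rfl⟩
    exact hweak s hs Γ hΓ

/-- Kantorovich duality on a finite space. -/
theorem kantorovich_duality
    {X : Type*} [Fintype X]
    (d : X → X → ℝ) (hd : IsMetricOn d)
    (μ ν : X → ℝ) (hμ : IsProbVec μ) (hν : IsProbVec ν) :
    Wass d μ ν =
      sSup {s | ∃ f g : X → ℝ, (∀ z₁ z₂, f z₁ + g z₂ ≤ d z₁ z₂) ∧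
        s = ∑ y, f y * μ y + ∑ z, g z * ν z} :=
  kantorovich_duality_general d μ ν hμ hν
end

section
/- High-confidence Wasserstein bound between empirical and average distributions: let X be a finite set with the Hamming metric, ξ₁, …, ξ_N independent X-valued random variables with ξ_i distributed as P_i, P̂ the empirical distribution P̂(y) = (1/N) Σ_i 1{ξ_i = y}, and P̄ = (1/N) Σ_i P_i. For β ∈ (0,1) set ε = sqrt( ln(2|X|/β) / (2N) ) and ρ = (|X|/2) ε. Then with probability at least 1 − β, W(P̂, P̄) ≤ ρ, where W is the 1-Wasserstein distance with the Hamming metric (equivalently, the total variation distance). -/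
/-!
Couple the two distributions maximally: keep their common mass `min μ ν` on the diagonal and
spread the two excesses as a product. Only the excesses pay a Hamming cost, so `W` is at most the
total variation `½ ∑ₓ |μ x - ν x|`, which is at most `(|X| / 2) ε` once every coordinate of the
empirical distribution is within `ε` of the averaged one. Each coordinate is a normalised sum of
independent indicators, so by Hoeffding's inequality it deviates by `ε` or more with probability
at most `2 exp (-2 N ε²) = β / |X|`, and a union bound over `X` concludes.
-/

open Finset

/-- The Hamming distance on `X`. -/
def hamming {X : Type*} [DecidableEq X] (x y : X) : ℝ := if x = y then 0 else 1

open MeasureTheory ProbabilityTheory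

open Real

section Wasserstein

variable {X : Type*}

lemma hamming_nonneg [DecidableEq X] (x y : X) : 0 ≤ hamming x y := by
  unfold hamming; split_ifs <;> norm_num

lemma hamming_self [DecidableEq X] (x : X) : hamming x x = 0 := if_pos rfl

def excess (μ ν : X → ℝ) (x : X) : ℝ := μ x - min (μ x) (ν x)

lemma excess_nonneg (μ ν : X → ℝ) (x : X) : 0 ≤ excess μ ν x :=
  sub_nonneg.2 (min_le_left _ _)

lemma abs_sub_eq_excess_add_excess (μ ν : X → ℝ) (x : X) :
    |μ x - ν x| = excess μ ν x + excess ν μ x := by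
  unfold excess
  rcases le_total (μ x) (ν x) with h | h <;> simp [h, abs_of_nonneg, abs_of_nonpos]

variable [Fintype X]

lemma wass_le_of_isCoupling {d : X → X → ℝ} (hd : ∀ x y, 0 ≤ d x y) {μ ν : X → ℝ}
    {Γ : X × X → ℝ} (hΓ : IsCoupling μ ν Γ) : Wass d μ ν ≤ ∑ p : X × X, Γ p * d p.1 p.2 := by
  refine csInf_le ⟨0, ?_⟩ ⟨Γ, hΓ, rfl⟩
  rintro _ ⟨Γ', hΓ', rfl⟩
  exact sum_nonneg fun p _ => mul_nonneg (hΓ'.1 p) (hd p.1 p.2)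

lemma sum_excess_comm {μ ν : X → ℝ} (hμ : IsProbVec μ) (hν : IsProbVec ν) :
    ∑ x, excess ν μ x = ∑ x, excess μ ν x := by
  simp only [excess, sum_sub_distrib, hμ.2, hν.2, min_comm]

lemma two_mul_sum_excess {μ ν : X → ℝ} (hμ : IsProbVec μ) (hν : IsProbVec ν) :
    2 * ∑ x, excess μ ν x = ∑ x, |μ x - ν x| := by
  simp only [abs_sub_eq_excess_add_excess, sum_add_distrib, sum_excess_comm hμ hν]
  ring

lemma sum_excess_nonneg (μ ν : X → ℝ) : 0 ≤ ∑ x, excess μ ν x :=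
  sum_nonneg fun x _ => excess_nonneg μ ν x

-- also when the total excess is `0`: then every excess is `0`
lemma excess_mul_div_sum_excess (μ ν : X → ℝ) (x : X) :
    excess μ ν x * (∑ y, excess μ ν y) / ∑ y, excess μ ν y = excess μ ν x :=
  mul_div_cancel_of_imp fun hs =>
    (sum_eq_zero_iff_of_nonneg fun y _ => excess_nonneg μ ν y).1 hs x (mem_univ x)

variable [DecidableEq X]

noncomputable def maximalCoupling (μ ν : X → ℝ) (p : X × X) : ℝ :=
  (if p.1 = p.2 then min (μ p.1) (ν p.1) else 0) +
    excess μ ν p.1 * excess ν μ p.2 / ∑ x, excess μ ν x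

lemma isCoupling_maximalCoupling {μ ν : X → ℝ} (hμ : IsProbVec μ) (hν : IsProbVec ν) :
    IsCoupling μ ν (maximalCoupling μ ν) := by
  refine ⟨fun p => ?_, fun y => ?_, fun z => ?_⟩
  · refine add_nonneg ?_ (div_nonneg ?_ (sum_excess_nonneg μ ν))
    · split_ifs
      exacts [le_min (hμ.1 p.1) (hν.1 p.1), le_rfl]
    · exact mul_nonneg (excess_nonneg μ ν p.1) (excess_nonneg ν μ p.2)
  · simp only [maximalCoupling, sum_add_distrib, sum_ite_eq, mem_univ, if_true, ← sum_div,
      ← mul_sum]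
    rw [sum_excess_comm hμ hν, excess_mul_div_sum_excess, excess]
    ring
  · simp only [maximalCoupling, sum_add_distrib, sum_ite_eq', mem_univ, if_true, ← sum_div,
      ← sum_mul]
    rw [← sum_excess_comm hμ hν, mul_comm, excess_mul_div_sum_excess, excess, min_comm]
    ring

lemma sum_maximalCoupling_mul_hamming_le (μ ν : X → ℝ) :
    ∑ p : X × X, maximalCoupling μ ν p * hamming p.1 p.2 ≤ ∑ x, excess ν μ x :=
  calc ∑ p : X × X, maximalCoupling μ ν p * hamming p.1 p.2
      ≤ ∑ p : X × X, excess μ ν p.1 * excess ν μ p.2 / ∑ x, excess μ ν x := by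
        refine sum_le_sum fun ⟨y, z⟩ _ => ?_
        by_cases h : y = z
        · subst h
          rw [hamming_self, mul_zero]
          exact div_nonneg (mul_nonneg (excess_nonneg μ ν y) (excess_nonneg ν μ y))
            (sum_excess_nonneg μ ν)
        · simp [maximalCoupling, hamming, h]
    _ = (∑ x, excess μ ν x) * (∑ x, excess ν μ x) / ∑ x, excess μ ν x := by
        rw [← sum_div, Fintype.sum_prod_type, sum_mul_sum]
    _ ≤ ∑ x, excess ν μ x := by
        rw [mul_div_right_comm]
        exact mul_le_of_le_one_left (sum_excess_nonneg ν μ) (div_self_le_one _)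

lemma wass_hamming_le_half_sum_abs_sub {μ ν : X → ℝ} (hμ : IsProbVec μ) (hν : IsProbVec ν) :
    Wass hamming μ ν ≤ (1 / 2) * ∑ x, |μ x - ν x| :=
  calc Wass hamming μ ν ≤ ∑ p : X × X, maximalCoupling μ ν p * hamming p.1 p.2 :=
        wass_le_of_isCoupling hamming_nonneg (isCoupling_maximalCoupling hμ hν)
    _ ≤ ∑ x, excess ν μ x := sum_maximalCoupling_mul_hamming_le μ ν
    _ = (1 / 2) * ∑ x, |μ x - ν x| := by
        rw [sum_excess_comm hμ hν, ← two_mul_sum_excess hμ hν]; ring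

lemma wass_hamming_le_of_abs_sub_le {μ ν : X → ℝ} (hμ : IsProbVec μ) (hν : IsProbVec ν)
    {ε : ℝ} (hε : ∀ x, |μ x - ν x| ≤ ε) : Wass hamming μ ν ≤ (Fintype.card X / 2) * ε :=
  calc Wass hamming μ ν ≤ (1 / 2) * ∑ x, |μ x - ν x| := wass_hamming_le_half_sum_abs_sub hμ hν
    _ ≤ (1 / 2) * ∑ _x : X, ε := by gcongr with x; exact hε x
    _ = (Fintype.card X / 2) * ε := by rw [sum_const, card_univ, nsmul_eq_mul]; ring

end Wasserstein

section Mixture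

variable {X : Type*} {N : ℕ}

def pointMass [DecidableEq X] (x y : X) : ℝ := if x = y then 1 else 0

lemma pointMass_mem_Icc [DecidableEq X] (x y : X) : pointMass x y ∈ Set.Icc (0 : ℝ) 1 := by
  unfold pointMass; split_ifs <;> norm_num

lemma isProbVec_pointMass [Fintype X] [DecidableEq X] (x : X) : IsProbVec (pointMass x) :=
  ⟨fun y => (pointMass_mem_Icc x y).1, by simp [pointMass]⟩

noncomputable def uniformMixture (P : Fin N → X → ℝ) (y : X) : ℝ := (1 / N) * ∑ i, P i y

lemma isProbVec_uniformMixture [Fintype X] (hN : 0 < N) {P : Fin N → X → ℝ} (hP : ∀ i, IsProbVec (P i)) :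
    IsProbVec (uniformMixture P) := by
  refine ⟨fun y => mul_nonneg (by positivity) (sum_nonneg fun i _ => (hP i).1 y), ?_⟩
  simp only [uniformMixture, ← mul_sum]
  rw [sum_comm, sum_congr rfl fun i _ => (hP i).2]
  simp [hN.ne']

end Mixture

section Probability

variable {Ω : Type*} [MeasurableSpace Ω] {μ : Measure Ω} [IsProbabilityMeasure μ]

lemma measureReal_le_abs_sum_sub_integral_le {ι : Type*} [Fintype ι] {Z : ι → Ω → ℝ}
    (hindep : iIndepFun Z μ) (hmeas : ∀ i, Measurable (Z i))
    (hZ : ∀ i ω, Z i ω ∈ Set.Icc (0 : ℝ) 1) {t : ℝ} (ht : 0 ≤ t) :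
    μ.real {ω | t ≤ |∑ i, (Z i ω - μ[Z i])|} ≤ 2 * exp (-2 * t ^ 2 / Fintype.card ι) := by
  have hsubG : ∀ i, HasSubgaussianMGF (fun ω => Z i ω - μ[Z i]) ((‖(1 : ℝ) - 0‖₊ / 2) ^ 2) μ :=
    fun i => hasSubgaussianMGF_of_mem_Icc (hmeas i).aemeasurable (ae_of_all _ (hZ i))
  have hcentered : iIndepFun (fun i ω => Z i ω - μ[Z i]) μ :=
    hindep.comp (fun i z => z - ∫ ω, Z i ω ∂μ) fun _ => measurable_id.sub_const _
  have hupper := HasSubgaussianMGF.measure_sum_ge_le_of_iIndepFun hcentered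
    (s := univ) (fun i _ => hsubG i) ht
  have hlower := HasSubgaussianMGF.measure_sum_ge_le_of_iIndepFun
    (hcentered.comp (fun _ x => -x) fun _ => measurable_neg) (s := univ)
    (fun i _ => (hsubG i).neg) ht
  have hexp : -t ^ 2 / (2 * ((∑ _i : ι, (‖(1 : ℝ) - 0‖₊ / 2) ^ 2 : NNReal) : ℝ))
      = -2 * t ^ 2 / Fintype.card ι := by
    push_cast [sum_const, card_univ, nsmul_eq_mul, sub_zero, nnnorm_one]
    ring
  rw [hexp] at hupper hlower
  calc μ.real {ω | t ≤ |∑ i, (Z i ω - μ[Z i])|}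
      ≤ μ.real ({ω | t ≤ ∑ i, (Z i ω - μ[Z i])} ∪ {ω | t ≤ ∑ i, -(Z i ω - μ[Z i])}) := by
        refine measureReal_mono (fun ω hω => ?_)
        simpa only [Set.mem_union, Set.mem_ofPred_eq, sum_neg_distrib, ← le_abs] using hω
    _ ≤ 2 * exp (-2 * t ^ 2 / Fintype.card ι) := by
        refine (measureReal_union_le _ _).trans ?_
        simp only [Function.comp_apply] at hlower
        linarith

lemma ofReal_one_sub_le_measure_compl {s : Set Ω} {b : ℝ} (hs : μ.real s ≤ b) :
    ENNReal.ofReal (1 - b) ≤ μ sᶜ := by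
  rw [ENNReal.ofReal_le_iff_le_toReal (measure_ne_top μ _), ← measureReal_def]
  have := measureReal_union_le (μ := μ) s sᶜ
  rw [Set.union_compl_self, probReal_univ] at this
  linarith

end Probability

section Empirical

variable {Ω X : Type*} [MeasurableSpace Ω] {μ : Measure Ω} [DecidableEq X] [MeasurableSpace X]
  [MeasurableSingletonClass X] {N : ℕ}

noncomputable def empiricalDist (ξ : Fin N → Ω → X) (ω : Ω) : X → ℝ :=
  uniformMixture fun i => pointMass (ξ i ω)

lemma integral_pointMass_comp {ξ : Ω → X} (hξ : Measurable ξ) {y : X} {p : ℝ} (hp : 0 ≤ p)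
    (hdist : μ {ω | ξ ω = y} = ENNReal.ofReal p) : ∫ ω, pointMass (ξ ω) y ∂μ = p := by
  have hind : (fun ω => pointMass (ξ ω) y) = {ω | ξ ω = y}.indicator 1 := by
    ext ω; simp [pointMass, Set.indicator]
  rw [hind, integral_indicator_one (s := {ω | ξ ω = y}) (hξ (measurableSet_singleton y)),
    measureReal_def, hdist, ENNReal.toReal_ofReal hp]

lemma measureReal_le_abs_empiricalDist_sub_le [IsProbabilityMeasure μ] (hN : 0 < N)
    {ξ : Fin N → Ω → X} (hmeas : ∀ i, Measurable (ξ i)) (hindep : iIndepFun ξ μ)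
    {P : Fin N → X → ℝ} {y : X}
    (hP : ∀ i, 0 ≤ P i y) (hdist : ∀ i, μ {ω | ξ i ω = y} = ENNReal.ofReal (P i y))
    {ε : ℝ} (hε : 0 ≤ ε) :
    μ.real {ω | ε ≤ |empiricalDist ξ ω y - uniformMixture P y|} ≤
      2 * exp (-2 * N * ε ^ 2) := by
  have hg : Measurable fun x : X => pointMass x y :=
    Measurable.ite (measurableSet_singleton y) measurable_const measurable_const
  have hNR : (0 : ℝ) < N := Nat.cast_pos.2 hN
  have hevent : {ω | ε ≤ |empiricalDist ξ ω y - uniformMixture P y|} =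
      {ω | N * ε ≤ |∑ i, (pointMass (ξ i ω) y - ∫ ω', pointMass (ξ i ω') y ∂μ)|} := by
    ext ω
    simp only [Set.mem_ofPred_eq, empiricalDist, uniformMixture,
      integral_pointMass_comp (hmeas _) (hP _) (hdist _), sum_sub_distrib, ← mul_sub, abs_mul,
      abs_of_pos (one_div_pos.2 hNR)]
    rw [← le_div_iff₀' hNR]
    ring_nf
  have hbound := measureReal_le_abs_sum_sub_integral_le (Z := fun i ω => pointMass (ξ i ω) y)
    (hindep.comp (fun _ x => pointMass x y) fun _ => hg) (fun i => hg.comp (hmeas i))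
    (fun i ω => pointMass_mem_Icc _ _) (mul_nonneg hNR.le hε)
  rw [hevent]
  refine hbound.trans_eq ?_
  rw [Fintype.card_fin]
  field_simp

end Empirical

/-- High-confidence Wasserstein (Hamming, i.e. total-variation) bound between the empirical
distribution and the averaged true distribution. -/
theorem wasserstein_empirical_high_confidence
    {X : Type*} [Fintype X] [Nonempty X] [DecidableEq X]
    [MeasurableSpace X] [MeasurableSingletonClass X]
    {Ω : Type*} [MeasurableSpace Ω] (μp : Measure Ω) [IsProbabilityMeasure μp]
    (N : ℕ) (hN : 0 < N)
    (ξ : Fin N → Ω → X) (hmeas : ∀ i, Measurable (ξ i))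
    (hindep : iIndepFun ξ μp)
    (P : Fin N → X → ℝ) (hP : ∀ i, IsProbVec (P i))
    (hdist : ∀ i y, μp {ω | ξ i ω = y} = ENNReal.ofReal (P i y))
    (β : ℝ) (hβ : β ∈ Set.Ioo (0 : ℝ) 1)
    (ε ρ : ℝ)
    (hε : ε = Real.sqrt (Real.log (2 * (Fintype.card X : ℝ) / β) / (2 * (N : ℝ))))
    (hρ : ρ = ((Fintype.card X : ℝ) / 2) * ε) :
    ENNReal.ofReal (1 - β) ≤
      μp {ω | Wass hamming
          (fun y => (1 / (N : ℝ)) * ∑ i, if ξ i ω = y then (1 : ℝ) else 0)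
          (fun y => (1 / (N : ℝ)) * ∑ i, P i y) ≤ ρ} := by
  obtain ⟨hβ0, hβ1⟩ := hβ
  set K : ℝ := (Fintype.card X : ℝ)
  have hK : 1 ≤ K := Nat.one_le_cast.2 Fintype.card_pos
  have hε0 : 0 ≤ ε := hε ▸ sqrt_nonneg _
  have hβ_eq : 2 * K * exp (-2 * N * ε ^ 2) = β := by
    have hlog : 0 ≤ log (2 * K / β) := log_nonneg ((one_le_div hβ0).2 (by linarith))
    have hN' : (N : ℝ) ≠ 0 := Nat.cast_ne_zero.2 hN.ne'
    rw [hε, sq_sqrt (by positivity),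
      show -2 * (N : ℝ) * (log (2 * K / β) / (2 * N)) = -log (2 * K / β) by field_simp,
      exp_neg, exp_log (by positivity)]
    field_simp
  set bad := ⋃ y, {ω | ε ≤ |empiricalDist ξ ω y - uniformMixture P y|}
  have hbad : μp.real bad ≤ β :=
    calc μp.real bad
        ≤ ∑ y, μp.real {ω | ε ≤ |empiricalDist ξ ω y - uniformMixture P y|} :=
          measureReal_iUnion_fintype_le _
      _ ≤ ∑ _y : X, 2 * exp (-2 * N * ε ^ 2) := sum_le_sum fun y _ =>
          measureReal_le_abs_empiricalDist_sub_le hN hmeas hindep (fun i => (hP i).1 y)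
            (hdist · y) hε0
      _ = β := by rw [sum_const, card_univ, nsmul_eq_mul, ← hβ_eq]; ring
  refine (ofReal_one_sub_le_measure_compl hbad).trans (measure_mono fun ω hω => ?_)
  have hclose : ∀ y, |empiricalDist ξ ω y - uniformMixture P y| < ε := by
    simpa [bad] using hω
  rw [Set.mem_ofPred_eq, hρ]
  exact wass_hamming_le_of_abs_sub_le
    (isProbVec_uniformMixture hN fun i => isProbVec_pointMass (ξ i ω))
    (isProbVec_uniformMixture hN hP) fun y => (hclose y).le
end

section
/- Finite-horizon expression of the robust safety function (Lemma 1): in the finite time-inhomogeneous Markov chain setting with rectangular Wasserstein ambiguity sets, for every t ∈ {0, …, T_max − 1} and x ∈ H, the robust safety function satisfies S^R(t,x) = sup over all perturbed kernel families (Q_{k,y})_{k ∈ {t,…,T_max−1}, y ∈ H} with W(Q_{k,y}, P_{k,y}) ≤ δ for all (k,y), of the expectation under the chain driven by the kernels Q of the sum Σ_{k=t}^{τ−1} κ(X_k, Q_{k,X_k}) started from X_t = x, where τ is the first hitting time of U ∪ E after t and κ(y, Q) = Σ_{z∈U} Q(z). -/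
open Finset

/-- The probability, under the time-inhomogeneous kernel family `Q`, that the chain started at
state `x` at time `t` hits the unsafe set `U` before hitting the goal set `E` within `n` further
steps (states in `U ∪ E` are treated as absorbing). -/
noncomputable def hitProbAux {X : Type*} [Fintype X] [DecidableEq X] (U E : Finset X)
    (Q : ℕ → X → X → ℝ) : ℕ → ℕ → X → ℝ
  | 0, _, x => if x ∈ U then 1 else 0
  | n + 1, t, x =>
      if x ∈ U then 1
      else if x ∈ E then 0
      else ∑ y, Q t x y * hitProbAux U E Q n (t + 1) y

/-- The robust safety function: the supremum, over all perturbed kernel families whose rows (for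
living states) lie in the Wasserstein (Hamming) ball of radius `δ` around the nominal rows of `P`,
of the probability of hitting `U` before `E`, started from state `x` at time `t`, with almost-sure
hitting-time bound `Tmax`. -/
noncomputable def robustSafety {X : Type*} [Fintype X] [DecidableEq X] (U E : Finset X)
    (P : ℕ → X → X → ℝ) (δ : ℝ) (Tmax : ℕ) (t : ℕ) (x : X) : ℝ :=
  sSup {s | ∃ Q : ℕ → X → X → ℝ,
    (∀ k y, IsProbVec (Q k y)) ∧
    (∀ k y, y ∉ U → y ∉ E → Wass hamming (Q k y) (P k y) ≤ δ) ∧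
    s = hitProbAux U E Q (Tmax - t) t x}

/-- The expected cumulative cost `E[∑_{k=t}^{τ-1} κ(X_k)]` under the kernel family `Q`, over `n`
remaining steps, where the chain is stopped upon entering `U ∪ E`. -/
noncomputable def expCostAux {X : Type*} [Fintype X] [DecidableEq X] (U E : Finset X)
    (κ : ℕ → X → ℝ) (Q : ℕ → X → X → ℝ) : ℕ → ℕ → X → ℝ
  | 0, _, _ => 0
  | n + 1, t, x =>
      if x ∈ U ∨ x ∈ E then 0
      else κ t x + ∑ y, Q t x y * expCostAux U E κ Q n (t + 1) y

/-!
Hitting `U` before `E` happens exactly at the step at which the chain jumps from a living state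
into `U`, and from a living state `y` at time `k` this jump has probability `∑_{z ∈ U} Q k y z`.
Hence, for every kernel family separately, the hitting probability is the expected sum of these
one-step probabilities up to absorption; taking the supremum over the ambiguity set on both sides
gives the theorem.
-/

theorem sum_mul_add_indicator {X : Type*} [Fintype X] [DecidableEq X] (U : Finset X)
    (q c : X → ℝ) :
    ∑ y, q y * (c y + if y ∈ U then 1 else 0) = ∑ y, q y * c y + ∑ z ∈ U, q z := by
  simp only [mul_add, mul_ite, mul_one, mul_zero, sum_add_distrib, sum_ite_mem, univ_inter]

theorem hitProbAux_eq_expCostAux_add {X : Type*} [Fintype X] [DecidableEq X]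
    (U E : Finset X) (Q : ℕ → X → X → ℝ) (n t : ℕ) (x : X) :
    hitProbAux U E Q n t x =
      expCostAux U E (fun k y => ∑ z ∈ U, Q k y z) Q n t x + if x ∈ U then 1 else 0 := by
  induction n generalizing t x with
  | zero => simp [hitProbAux, expCostAux]
  | succ n ih =>
    by_cases hxU : x ∈ U
    · simp [hitProbAux, expCostAux, hxU]
    by_cases hxE : x ∈ E
    · simp [hitProbAux, expCostAux, hxU, hxE]
    simp only [hitProbAux, expCostAux, hxU, hxE, ih, sum_mul_add_indicator, or_self,
      if_false, add_zero]
    ring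

theorem hitProbAux_eq_expCostAux {X : Type*} [Fintype X] [DecidableEq X]
    (U E : Finset X) (Q : ℕ → X → X → ℝ) (n t : ℕ) {x : X} (hxU : x ∉ U) :
    hitProbAux U E Q n t x = expCostAux U E (fun k y => ∑ z ∈ U, Q k y z) Q n t x := by
  rw [hitProbAux_eq_expCostAux_add, if_neg hxU, add_zero]

theorem robust_safety_finite_horizon_general
    {X : Type*} [Fintype X] [DecidableEq X]
    (U E : Finset X)
    (Tmax : ℕ) (P : ℕ → X → X → ℝ)
    (δ : ℝ)
    (t : ℕ) (x : X) (hxU : x ∉ U) :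
    robustSafety U E P δ Tmax t x =
      sSup {s | ∃ Q : ℕ → X → X → ℝ,
        (∀ k y, IsProbVec (Q k y)) ∧
        (∀ k y, y ∉ U → y ∉ E → Wass hamming (Q k y) (P k y) ≤ δ) ∧
        s = expCostAux U E (fun k y => ∑ z ∈ U, Q k y z) Q (Tmax - t) t x} := by
  simp only [robustSafety, hitProbAux_eq_expCostAux U E _ _ _ hxU]

/-- Finite-horizon expression of the robust safety function (Lemma 1): the robust safety function
equals the worst-case expected sum of the one-step stage costs `κ(y,Q) = ∑_{z ∈ U} Q z` up to the
hitting time of `U ∪ E`. -/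
theorem robust_safety_finite_horizon
    {X : Type*} [Fintype X] [DecidableEq X]
    (U E : Finset X) (hUE : Disjoint U E)
    (Tmax : ℕ) (P : ℕ → X → X → ℝ) (hP : ∀ k y, IsProbVec (P k y))
    (δ : ℝ) (hδ : 0 ≤ δ)
    (t : ℕ) (ht : t < Tmax) (x : X) (hxU : x ∉ U) (hxE : x ∉ E) :
    robustSafety U E P δ Tmax t x =
      sSup {s | ∃ Q : ℕ → X → X → ℝ,
        (∀ k y, IsProbVec (Q k y)) ∧
        (∀ k y, y ∉ U → y ∉ E → Wass hamming (Q k y) (P k y) ≤ δ) ∧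
        s = expCostAux U E (fun k y => ∑ z ∈ U, Q k y z) Q (Tmax - t) t x} :=
  robust_safety_finite_horizon_general U E Tmax P δ t x hxU
end

section
/- Dual form of the robust safety function recursion (Lemma 4): in the finite time-inhomogeneous Markov chain setting with rectangular Wasserstein ambiguity sets, with c(x,y) = 1 if y ∈ U and 0 otherwise and with S^R(t+1,y) = 0 for y ∈ U ∪ E, for every t ∈ {0, …, T_max − 1} and x ∈ H, S^R(t,x) = inf over λ ≥ 0 of [ λ δ + Σ_{y∈X} ( max_{l∈X} ( −λ d(l,y) + c(x,l) + S^R(t+1,l) ) ) P_{t,x}(y) ], where d is the Hamming metric on X. -/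
open Finset

/-!
Write `V n t` for the robust probability of hitting `U` before `E` within `n` steps from time
`t`. Since the ambiguity set is rectangular, near-optimal perturbations can be chosen row by row,
which yields the robust Bellman equation
`V (n + 1) t x = sup {∑ z, q z * V n (t + 1) z | W(q, P t x) ≤ δ}`; and `V` is `1` on `U` and
`0` on `E`, which is the continuation term of the statement. The supremum is a linear program
whose Lagrangian dual is the stated infimum. Weak duality comes from integrating
`f y ≤ g z + λ d(y, z)`, `g` the penalised supremum, against a coupling; for the Hamming metric the
dual is attained by moving the mass `min δ 1` from the lowest values of `f` to a maximiser of `f`.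
-/

namespace RobustSafety

lemma hamming_nonneg {X : Type*} [DecidableEq X] (x y : X) : 0 ≤ hamming x y := by
  unfold hamming; split_ifs <;> norm_num

lemma hamming_le_one {X : Type*} [DecidableEq X] (x y : X) : hamming x y ≤ 1 := by
  unfold hamming; split_ifs <;> norm_num

@[simp]
lemma hamming_self {X : Type*} [DecidableEq X] (x : X) : hamming x x = 0 := if_pos rfl

/-- `r` is the lowest mass `a` of `p` in the order of `f`, and `v` the matching quantile of `f`. -/
lemma exists_lower_split {X : Type*} [DecidableEq X] (f : X → ℝ) {p : X → ℝ}
    (hp : ∀ z, 0 ≤ p z) (s : Finset X) {a : ℝ} (ha₀ : 0 ≤ a) (ha : a ≤ ∑ z ∈ s, p z) :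
    ∃ v : ℝ, ∃ r : X → ℝ, (∀ z, 0 ≤ r z ∧ r z ≤ p z) ∧ ∑ z ∈ s, r z = a ∧
      (∀ z ∈ s, f z < v → r z = p z) ∧ (∀ z ∈ s, v < f z → r z = 0) := by
  induction s using Finset.induction_on_max_value f generalizing a with
  | empty =>
    exact ⟨0, 0, fun z => ⟨le_rfl, hp z⟩, by simp_all [le_antisymm ha ha₀], by simp, by simp⟩
  | insert b s hb hmax ih =>
    rw [sum_insert hb] at ha
    have hne : ∀ z ∈ s, z ≠ b := fun z hz hzb => hb (hzb ▸ hz)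
    by_cases hs : a ≤ ∑ z ∈ s, p z
    · obtain ⟨v, r, hr, hsum, hlow, hhigh⟩ := ih ha₀ hs
      refine ⟨min v (f b), Function.update r b 0, fun z => ?_, ?_, ?_, ?_⟩
      · rcases eq_or_ne z b with rfl | hz
        · simpa using hp z
        · simpa [hz] using hr z
      · rw [sum_insert hb, sum_update_of_notMem hb, Function.update_self, zero_add, hsum]
      · simp only [mem_insert, lt_min_iff]
        rintro z (rfl | hz) ⟨hzv, hzb⟩
        · exact absurd hzb (lt_irrefl _)
        · simpa [hne z hz] using hlow z hz hzv
      · simp only [mem_insert, min_lt_iff]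
        rintro z (rfl | hz) hvz
        · simp
        · have hvz : v < f z := hvz.resolve_right (hmax z hz).not_gt
          simpa [hne z hz] using hhigh z hz hvz
    · push Not at hs
      refine ⟨f b, Function.update p b (a - ∑ z ∈ s, p z), fun z => ?_, ?_, ?_, ?_⟩
      · rcases eq_or_ne z b with rfl | hz
        · simp only [Function.update_self]; constructor <;> linarith
        · simpa [hz] using hp z
      · rw [sum_insert hb, sum_update_of_notMem hb, Function.update_self, sub_add_cancel]
      · rintro z - hz
        exact Function.update_of_ne (ne_of_apply_ne f hz.ne) _ _
      · simp only [mem_insert]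
        rintro z (rfl | hz) hbz
        · exact absurd hbz (lt_irrefl _)
        · exact absurd hbz (hmax z hz).not_gt

variable {X : Type*} [Fintype X]

lemma sum_mul_le_of_forall_le {q f : X → ℝ} (hq : IsProbVec q) {c : ℝ} (hf : ∀ z, f z ≤ c) :
    ∑ z, q z * f z ≤ c :=
  calc ∑ z, q z * f z ≤ ∑ z, q z * c :=
        sum_le_sum fun z _ => mul_le_mul_of_nonneg_left (hf z) (hq.1 z)
    _ = c := by rw [← sum_mul, hq.2, one_mul]

lemma isCoupling_mul {μ ν : X → ℝ} (hμ : IsProbVec μ) (hν : IsProbVec ν) :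
    IsCoupling μ ν (fun p => μ p.1 * ν p.2) :=
  ⟨fun p => mul_nonneg (hμ.1 _) (hν.1 _), fun y => by simp [← mul_sum, hν.2],
    fun z => by simp [← sum_mul, hμ.2]⟩

section Wasserstein

variable {d : X → X → ℝ} {μ ν : X → ℝ}

lemma Wass_nonneg (hd : ∀ x y, 0 ≤ d x y) : 0 ≤ Wass d μ ν :=
  Real.sInf_nonneg <| by
    rintro _ ⟨Γ, hΓ, rfl⟩
    exact sum_nonneg fun p _ => mul_nonneg (hΓ.1 p) (hd _ _)

lemma Wass_le_of_isCoupling (hd : ∀ x y, 0 ≤ d x y) {Γ : X × X → ℝ} (hΓ : IsCoupling μ ν Γ) :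
    Wass d μ ν ≤ ∑ p : X × X, Γ p * d p.1 p.2 := by
  refine csInf_le ⟨0, ?_⟩ ⟨Γ, hΓ, rfl⟩
  rintro _ ⟨Γ', hΓ', rfl⟩
  exact sum_nonneg fun p _ => mul_nonneg (hΓ'.1 p) (hd _ _)

lemma Wass_self_eq_zero [DecidableEq X] (hd : ∀ x y, 0 ≤ d x y) (hd₀ : ∀ x, d x x = 0)
    (hμ : IsProbVec μ) : Wass d μ μ = 0 := by
  refine le_antisymm ?_ (Wass_nonneg hd)
  have hdiag : IsCoupling μ μ (fun p => if p.1 = p.2 then μ p.1 else 0) :=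
    ⟨fun p => by dsimp only; split_ifs <;> simp [hμ.1], fun y => by simp, fun z => by simp⟩
  refine (Wass_le_of_isCoupling hd hdiag).trans_eq (sum_eq_zero fun p _ => ?_)
  split_ifs with h <;> simp [h, hd₀]

lemma sum_mul_le_of_isCoupling [Nonempty X] {Γ : X × X → ℝ} (hΓ : IsCoupling μ ν Γ)
    (f : X → ℝ) (lam : ℝ) :
    ∑ z, μ z * f z ≤ ∑ y, (univ.sup' univ_nonempty fun l => -lam * d l y + f l) * ν y +
      lam * ∑ p : X × X, Γ p * d p.1 p.2 := by
  set g : X → ℝ := fun y => univ.sup' univ_nonempty fun l => -lam * d l y + f l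
  have hfg : ∀ y z, f y ≤ g z + lam * d y z := fun y z => by
    have := le_sup' (fun l => -lam * d l z + f l) (mem_univ y)
    linarith
  calc ∑ z, μ z * f z = ∑ p : X × X, Γ p * f p.1 := by
        simp [Fintype.sum_prod_type, ← sum_mul, hΓ.2.1]
    _ ≤ ∑ p : X × X, Γ p * (g p.2 + lam * d p.1 p.2) :=
        sum_le_sum fun p _ => mul_le_mul_of_nonneg_left (hfg _ _) (hΓ.1 p)
    _ = ∑ p : X × X, Γ p * g p.2 + lam * ∑ p : X × X, Γ p * d p.1 p.2 := by
        rw [mul_sum, ← sum_add_distrib]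
        exact sum_congr rfl fun p _ => by ring
    _ = ∑ y, g y * ν y + lam * ∑ p : X × X, Γ p * d p.1 p.2 := by
        simp [Fintype.sum_prod_type_right, ← sum_mul, hΓ.2.2, mul_comm]

end Wasserstein

noncomputable def worstCaseExpectation (d : X → X → ℝ) (p : X → ℝ) (δ : ℝ) (f : X → ℝ) : ℝ :=
  sSup {s | ∃ q, IsProbVec q ∧ Wass d q p ≤ δ ∧ s = ∑ z, q z * f z}

/-- The Lagrangian dual of `worstCaseExpectation d p δ f`, at multiplier `lam`. -/
noncomputable def dualObjective [Nonempty X] (d : X → X → ℝ) (p : X → ℝ) (δ : ℝ) (f : X → ℝ)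
    (lam : ℝ) : ℝ :=
  lam * δ + ∑ y, (univ.sup' univ_nonempty fun l => -lam * d l y + f l) * p y

lemma le_worstCaseExpectation {d : X → X → ℝ} {p q : X → ℝ} {δ : ℝ} (hq : IsProbVec q)
    (hW : Wass d q p ≤ δ) (f : X → ℝ) : ∑ z, q z * f z ≤ worstCaseExpectation d p δ f := by
  obtain ⟨c, hc⟩ := (Set.finite_range f).bddAbove
  refine le_csSup ⟨c, ?_⟩ ⟨q, hq, hW, rfl⟩
  rintro _ ⟨q', hq', -, rfl⟩
  exact sum_mul_le_of_forall_le hq' fun z => hc (Set.mem_range_self z)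

lemma exists_lt_of_lt_worstCaseExpectation {d : X → X → ℝ} {p f : X → ℝ} {δ b : ℝ}
    (hp : IsProbVec p) (hpp : Wass d p p ≤ δ) (hb : b < worstCaseExpectation d p δ f) :
    ∃ q, IsProbVec q ∧ Wass d q p ≤ δ ∧ b < ∑ z, q z * f z := by
  rw [worstCaseExpectation] at hb
  obtain ⟨_, ⟨q, hq, hW, rfl⟩, hlt⟩ := exists_lt_of_lt_csSup (by exact ⟨_, p, hp, hpp, rfl⟩) hb
  exact ⟨q, hq, hW, hlt⟩

lemma sum_mul_le_dualObjective [Nonempty X] {d : X → X → ℝ} {p q : X → ℝ} {δ lam : ℝ}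
    (hq : IsProbVec q) (hp : IsProbVec p) (hW : Wass d q p ≤ δ) (hlam : 0 ≤ lam)
    (f : X → ℝ) : ∑ z, q z * f z ≤ dualObjective d p δ f lam := by
  set g : X → ℝ := fun y => univ.sup' univ_nonempty fun l => -lam * d l y + f l
  have hcost : ∑ z, q z * f z - ∑ y, g y * p y ≤ lam * Wass d q p := by
    rw [Wass, ← smul_eq_mul, ← Real.sInf_smul_of_nonneg hlam]
    refine le_csInf ⟨_, ⟨_, ⟨_, isCoupling_mul hq hp, rfl⟩, rfl⟩⟩ ?_
    rintro _ ⟨_, ⟨Γ, hΓ, rfl⟩, rfl⟩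
    have := sum_mul_le_of_isCoupling (d := d) hΓ f lam
    simp only [smul_eq_mul]
    linarith
  have := mul_le_mul_of_nonneg_left hW hlam
  rw [dualObjective]
  linarith

lemma sum_max_mul_eq {f p r : X → ℝ} {v : ℝ} (hlow : ∀ z, f z < v → r z = p z)
    (hhigh : ∀ z, v < f z → r z = 0) :
    ∑ z, max (f z) v * p z = ∑ z, p z * f z + v * ∑ z, r z - ∑ z, r z * f z := by
  have key : ∀ z, max (f z) v * p z = p z * f z + v * r z - r z * f z := fun z => by
    rcases lt_trichotomy (f z) v with h | h | h
    · rw [max_eq_right h.le, hlow z h]; ring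
    · rw [h, max_self]; ring
    · rw [max_eq_left h.le, hhigh z h]; ring
  simp only [key, sum_add_distrib, sum_sub_distrib, mul_sum]

section Hamming

variable [DecidableEq X]

def moveMassTo (x₀ : X) (p r : X → ℝ) (z : X) : ℝ :=
  p z - r z + if z = x₀ then ∑ y, r y else 0

variable {p r : X → ℝ} (x₀ : X)

lemma isProbVec_moveMassTo (hp : IsProbVec p) (hr : ∀ z, 0 ≤ r z ∧ r z ≤ p z) :
    IsProbVec (moveMassTo x₀ p r) := by
  refine ⟨fun z => ?_, ?_⟩
  · have := (hr z).2
    have := sum_nonneg fun y (_ : y ∈ univ) => (hr y).1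
    unfold moveMassTo; split_ifs <;> linarith
  · simp [moveMassTo, sum_add_distrib, sum_sub_distrib, hp.2]

lemma Wass_moveMassTo_le (hr : ∀ z, 0 ≤ r z ∧ r z ≤ p z) :
    Wass hamming (moveMassTo x₀ p r) p ≤ ∑ y, r y := by
  set Γ : X × X → ℝ := fun w =>
    (if w.1 = w.2 then p w.2 - r w.2 else 0) + if w.1 = x₀ then r w.2 else 0
  have hΓ : IsCoupling (moveMassTo x₀ p r) p Γ := by
    refine ⟨fun w => ?_, fun y => ?_, fun z => ?_⟩
    · have := hr w.2
      simp only [Γ]; split_ifs <;> linarith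
    · simp [Γ, sum_add_distrib, moveMassTo]
    · simp [Γ, sum_add_distrib]
  refine (Wass_le_of_isCoupling hamming_nonneg hΓ).trans ?_
  calc ∑ w : X × X, Γ w * hamming w.1 w.2
      ≤ ∑ w : X × X, if w.1 = x₀ then r w.2 else 0 := sum_le_sum fun ⟨y, z⟩ _ => by
        by_cases hyz : y = z
        · subst hyz
          simp only [Γ, hamming_self, mul_zero]
          split_ifs <;> simp [(hr y).1]
        · simp [Γ, hyz, hamming]
    _ = ∑ y, r y := by simp [Fintype.sum_prod_type]

lemma sum_moveMassTo_mul (f : X → ℝ) :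
    ∑ z, moveMassTo x₀ p r z * f z =
      ∑ z, p z * f z - ∑ z, r z * f z + (∑ y, r y) * f x₀ := by
  simp [moveMassTo, add_mul, sub_mul, sum_add_distrib, sum_sub_distrib]

lemma sup'_neg_mul_hamming_add [Nonempty X] {lam : ℝ} (hlam : 0 ≤ lam) (f : X → ℝ) (y : X) :
    univ.sup' univ_nonempty (fun l => -lam * hamming l y + f l) =
      max (f y) (univ.sup' univ_nonempty f - lam) := by
  obtain ⟨x₀, -, hx₀⟩ := exists_mem_eq_sup' univ_nonempty f
  apply le_antisymm
  · refine sup'_le _ _ fun l _ => ?_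
    rcases eq_or_ne l y with rfl | hl
    · simp
    · have := le_sup' f (mem_univ l)
      simp only [hamming, if_neg hl]
      exact le_max_of_le_right (by linarith)
  · have hy := le_sup' (fun l => -lam * hamming l y + f l) (mem_univ y)
    have h₁ := le_sup' (fun l => -lam * hamming l y + f l) (mem_univ x₀)
    have h₂ := hamming_le_one x₀ y
    simp only [hamming_self, mul_zero, zero_add] at hy
    rw [hx₀]
    exact max_le hy (by nlinarith)

/-- The optimal plan moves the mass `min δ 1` from the lowest values of `f` to a maximiser of
`f`; the optimal multiplier is the gap between the maximum of `f` and the level of the cut. -/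
lemma exists_dualObjective_hamming_eq [Nonempty X] {p : X → ℝ} (hp : IsProbVec p) {δ : ℝ}
    (hδ : 0 ≤ δ) (f : X → ℝ) :
    ∃ lam, 0 ≤ lam ∧ ∃ q, IsProbVec q ∧ Wass hamming q p ≤ δ ∧
      dualObjective hamming p δ f lam = ∑ z, q z * f z := by
  obtain ⟨x₀, -, hx₀⟩ := exists_mem_eq_sup' univ_nonempty f
  set M := univ.sup' univ_nonempty f
  have hM : ∀ z, f z ≤ M := fun z => le_sup' f (mem_univ z)
  obtain ⟨v, r, hr, hsum, hlow, hhigh, hvM, hslack⟩ : ∃ v : ℝ, ∃ r : X → ℝ,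
      (∀ z, 0 ≤ r z ∧ r z ≤ p z) ∧ ∑ z, r z ≤ δ ∧ (∀ z, f z < v → r z = p z) ∧
      (∀ z, v < f z → r z = 0) ∧ v ≤ M ∧ (M - v) * (δ - ∑ z, r z) = 0 := by
    rcases le_or_gt 1 δ with h1 | h1
    · exact ⟨M, p, fun z => ⟨hp.1 z, le_rfl⟩, hp.2 ▸ h1, fun _ _ => rfl,
        fun z hz => absurd (hM z) hz.not_ge, le_rfl, by ring⟩
    · obtain ⟨v, r, hr, hsum, hlow, hhigh⟩ :=
        exists_lower_split f hp.1 univ hδ (hp.2 ▸ h1.le)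
      refine ⟨min v M, r, hr, hsum.le, fun z hz => hlow z (mem_univ z) (lt_min_iff.1 hz).1,
        fun z hz => hhigh z (mem_univ z) ?_, min_le_right _ _, by rw [hsum]; ring⟩
      exact (min_lt_iff.1 hz).resolve_right (hM z).not_gt
  refine ⟨M - v, sub_nonneg.2 hvM, moveMassTo x₀ p r, isProbVec_moveMassTo x₀ hp hr,
    (Wass_moveMassTo_le x₀ hr).trans hsum, ?_⟩
  have hsup : ∀ y, univ.sup' univ_nonempty (fun l => -(M - v) * hamming l y + f l) =
      max (f y) v := fun y => by
    rw [sup'_neg_mul_hamming_add (sub_nonneg.2 hvM), sub_sub_cancel]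
  rw [dualObjective, sum_moveMassTo_mul, ← hx₀]
  simp only [hsup]
  rw [sum_max_mul_eq hlow hhigh]
  linear_combination hslack

lemma Wass_hamming_self_le {μ : X → ℝ} (hμ : IsProbVec μ) {δ : ℝ} (hδ : 0 ≤ δ) :
    Wass hamming μ μ ≤ δ :=
  (Wass_self_eq_zero hamming_nonneg hamming_self hμ).trans_le hδ

theorem worstCaseExpectation_hamming_eq_sInf [Nonempty X] {p : X → ℝ} (hp : IsProbVec p)
    {δ : ℝ} (hδ : 0 ≤ δ) (f : X → ℝ) :
    worstCaseExpectation hamming p δ f =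
      sInf {s | ∃ lam, 0 ≤ lam ∧ s = dualObjective hamming p δ f lam} := by
  have hself := Wass_hamming_self_le hp hδ
  apply le_antisymm
  · refine csSup_le ⟨_, p, hp, hself, rfl⟩ ?_
    rintro _ ⟨q, hq, hW, rfl⟩
    refine le_csInf ⟨_, 0, le_rfl, rfl⟩ ?_
    rintro _ ⟨lam, hlam, rfl⟩
    exact sum_mul_le_dualObjective hq hp hW hlam f
  · obtain ⟨lam, hlam, q, hq, hW, heq⟩ := exists_dualObjective_hamming_eq hp hδ f
    have hbdd : BddBelow {s | ∃ lam, 0 ≤ lam ∧ s = dualObjective hamming p δ f lam} := by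
      refine ⟨∑ z, p z * f z, ?_⟩
      rintro _ ⟨lam', hlam', rfl⟩
      exact sum_mul_le_dualObjective hp hp hself hlam' f
    calc sInf {s | ∃ lam, 0 ≤ lam ∧ s = dualObjective hamming p δ f lam}
        ≤ dualObjective hamming p δ f lam := csInf_le hbdd ⟨lam, hlam, rfl⟩
      _ = ∑ z, q z * f z := heq
      _ ≤ worstCaseExpectation hamming p δ f := le_worstCaseExpectation hq hW f

end Hamming

section Chain

variable [DecidableEq X] {U E : Finset X} {P Q : ℕ → X → X → ℝ} {δ : ℝ}

def IsAdmissibleKernel (U E : Finset X) (P : ℕ → X → X → ℝ) (δ : ℝ) (Q : ℕ → X → X → ℝ) :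
    Prop :=
  (∀ k y, IsProbVec (Q k y)) ∧ ∀ k y, y ∉ U → y ∉ E → Wass hamming (Q k y) (P k y) ≤ δ

noncomputable def robustHitProb (U E : Finset X) (P : ℕ → X → X → ℝ) (δ : ℝ) (n t : ℕ)
    (x : X) : ℝ :=
  sSup {s | ∃ Q, IsAdmissibleKernel U E P δ Q ∧ s = hitProbAux U E Q n t x}

lemma robustSafety_eq_robustHitProb (Tmax t : ℕ) (x : X) :
    robustSafety U E P δ Tmax t x = robustHitProb U E P δ (Tmax - t) t x := by
  simp only [robustSafety, robustHitProb, IsAdmissibleKernel, and_assoc]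

lemma hitProbAux_of_mem_U {x : X} (n t : ℕ) (hx : x ∈ U) : hitProbAux U E Q n t x = 1 := by
  cases n <;> simp [hitProbAux, hx]

lemma hitProbAux_of_mem_E {x : X} (n t : ℕ) (hxU : x ∉ U) (hxE : x ∈ E) :
    hitProbAux U E Q n t x = 0 := by
  cases n <;> simp [hitProbAux, hxU, hxE]

lemma hitProbAux_succ_of_notMem {x : X} (n t : ℕ) (hxU : x ∉ U) (hxE : x ∉ E) :
    hitProbAux U E Q (n + 1) t x = ∑ y, Q t x y * hitProbAux U E Q n (t + 1) y := by
  simp [hitProbAux, hxU, hxE]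

lemma hitProbAux_le_one (hQ : ∀ k y, IsProbVec (Q k y)) (n : ℕ) :
    ∀ t x, hitProbAux U E Q n t x ≤ 1 := by
  induction n with
  | zero => intro t x; unfold hitProbAux; split_ifs <;> norm_num
  | succ n ih =>
    intro t x
    unfold hitProbAux
    split_ifs
    · exact le_rfl
    · exact zero_le_one
    · exact sum_mul_le_of_forall_le (hQ t x) (ih (t + 1))

lemma hitProbAux_update_of_lt {k t : ℕ} (h : k < t) (R : X → X → ℝ) (n : ℕ) (x : X) :
    hitProbAux U E (Function.update Q k R) n t x = hitProbAux U E Q n t x := by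
  induction n generalizing t x with
  | zero => rfl
  | succ n ih =>
    unfold hitProbAux
    rw [Function.update_of_ne h.ne']
    simp only [ih (h.trans t.lt_succ_self)]

lemma isAdmissibleKernel_self (hP : ∀ k y, IsProbVec (P k y)) (hδ : 0 ≤ δ) :
    IsAdmissibleKernel U E P δ P :=
  ⟨hP, fun k y _ _ => Wass_hamming_self_le (hP k y) hδ⟩

lemma IsAdmissibleKernel.update (hQ : IsAdmissibleKernel U E P δ Q) {t : ℕ} {R : X → X → ℝ}
    (hR : ∀ y, IsProbVec (R y))
    (hRW : ∀ y, y ∉ U → y ∉ E → Wass hamming (R y) (P t y) ≤ δ) :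
    IsAdmissibleKernel U E P δ (Function.update Q t R) := by
  refine ⟨fun k y => ?_, fun k y hyU hyE => ?_⟩ <;> rcases eq_or_ne k t with rfl | hk
  · simpa using hR y
  · simpa [hk] using hQ.1 k y
  · simpa using hRW y hyU hyE
  · simpa [hk] using hQ.2 k y hyU hyE

lemma hitProbAux_le_robustHitProb (hQ : IsAdmissibleKernel U E P δ Q) (n t : ℕ) (x : X) :
    hitProbAux U E Q n t x ≤ robustHitProb U E P δ n t x := by
  refine le_csSup ⟨1, ?_⟩ ⟨Q, hQ, rfl⟩
  rintro _ ⟨Q', hQ', rfl⟩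
  exact hitProbAux_le_one hQ'.1 n t x

lemma robustHitProb_le_of_forall (hP : ∀ k y, IsProbVec (P k y)) (hδ : 0 ≤ δ) {n t : ℕ}
    {x : X} {c : ℝ} (h : ∀ Q, IsAdmissibleKernel U E P δ Q → hitProbAux U E Q n t x ≤ c) :
    robustHitProb U E P δ n t x ≤ c := by
  refine csSup_le ⟨_, P, isAdmissibleKernel_self hP hδ, rfl⟩ ?_
  rintro _ ⟨Q, hQ, rfl⟩
  exact h Q hQ

lemma robustHitProb_of_mem_U (hP : ∀ k y, IsProbVec (P k y)) (hδ : 0 ≤ δ) {n t : ℕ} {x : X}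
    (hx : x ∈ U) : robustHitProb U E P δ n t x = 1 := by
  refine le_antisymm (robustHitProb_le_of_forall hP hδ fun Q _ => ?_) ?_
  · rw [hitProbAux_of_mem_U n t hx]
  · rw [← hitProbAux_of_mem_U (E := E) (Q := P) n t hx]
    exact hitProbAux_le_robustHitProb (isAdmissibleKernel_self hP hδ) n t x

lemma robustHitProb_of_mem_E (hP : ∀ k y, IsProbVec (P k y)) (hδ : 0 ≤ δ) {n t : ℕ} {x : X}
    (hxU : x ∉ U) (hxE : x ∈ E) : robustHitProb U E P δ n t x = 0 := by
  refine le_antisymm (robustHitProb_le_of_forall hP hδ fun Q _ => ?_) ?_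
  · rw [hitProbAux_of_mem_E n t hxU hxE]
  · rw [← hitProbAux_of_mem_E (Q := P) n t hxU hxE]
    exact hitProbAux_le_robustHitProb (isAdmissibleKernel_self hP hδ) n t x

lemma robustHitProb_succ_le (hP : ∀ k y, IsProbVec (P k y)) (hδ : 0 ≤ δ) {n t : ℕ} {x : X}
    (hxU : x ∉ U) (hxE : x ∉ E) :
    robustHitProb U E P δ (n + 1) t x ≤
      worstCaseExpectation hamming (P t x) δ (robustHitProb U E P δ n (t + 1)) := by
  refine robustHitProb_le_of_forall hP hδ fun Q hQ => ?_
  calc hitProbAux U E Q (n + 1) t x = ∑ z, Q t x z * hitProbAux U E Q n (t + 1) z :=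
        hitProbAux_succ_of_notMem n t hxU hxE
    _ ≤ ∑ z, Q t x z * robustHitProb U E P δ n (t + 1) z :=
        sum_le_sum fun z _ => mul_le_mul_of_nonneg_left
          (hitProbAux_le_robustHitProb hQ n (t + 1) z) ((hQ.1 t x).1 z)
    _ ≤ _ := le_worstCaseExpectation (hQ.1 t x) (hQ.2 t x hxU hxE) _

lemma sum_mul_robustHitProb_sub_le_hitProbAux_update {n t : ℕ} {ε : ℝ} {R : X → X → ℝ}
    {x : X} (hR : IsProbVec (R x))
    (hQ : ∀ z, robustHitProb U E P δ n (t + 1) z - ε ≤ hitProbAux U E Q n (t + 1) z)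
    (hxU : x ∉ U) (hxE : x ∉ E) :
    ∑ z, R x z * robustHitProb U E P δ n (t + 1) z - ε ≤
      hitProbAux U E (Function.update Q t R) (n + 1) t x := by
  rw [hitProbAux_succ_of_notMem n t hxU hxE, Function.update_self]
  simp only [hitProbAux_update_of_lt (Nat.lt_add_one t)]
  have hgap : ∑ z, R x z * (robustHitProb U E P δ n (t + 1) z - hitProbAux U E Q n (t + 1) z)
      ≤ ε := sum_mul_le_of_forall_le hR fun z => by linarith [hQ z]
  simp only [mul_sub, sum_sub_distrib] at hgap
  linarith

/-- Rectangularity of the ambiguity set lets near-optimal rows be chosen independently for every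
state, so a single kernel family is near-optimal from all states at once. -/
lemma exists_isAdmissibleKernel_robustHitProb_sub_le (hP : ∀ k y, IsProbVec (P k y))
    (hδ : 0 ≤ δ) (n t : ℕ) {ε : ℝ} (hε : 0 < ε) : ∃ Q, IsAdmissibleKernel U E P δ Q ∧
      ∀ y, robustHitProb U E P δ n t y - ε ≤ hitProbAux U E Q n t y := by
  induction n generalizing t ε with
  | zero =>
    refine ⟨P, isAdmissibleKernel_self hP hδ, fun y => ?_⟩
    have : robustHitProb U E P δ 0 t y ≤ hitProbAux U E P 0 t y :=
      robustHitProb_le_of_forall hP hδ fun Q _ => le_of_eq rfl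
    linarith
  | succ n ih =>
    obtain ⟨Q₀, hQ₀, hopt⟩ := ih (t + 1) (half_pos hε)
    have hrow : ∀ y, ∃ q, IsProbVec q ∧ (y ∉ U → y ∉ E → Wass hamming q (P t y) ≤ δ ∧
        robustHitProb U E P δ (n + 1) t y - ε / 2 <
          ∑ z, q z * robustHitProb U E P δ n (t + 1) z) := by
      intro y
      by_cases hy : y ∉ U ∧ y ∉ E
      · have hlt : robustHitProb U E P δ (n + 1) t y - ε / 2 <
            worstCaseExpectation hamming (P t y) δ (robustHitProb U E P δ n (t + 1)) := by
          linarith [robustHitProb_succ_le hP hδ hy.1 hy.2 (n := n) (t := t)]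
        obtain ⟨q, hq, hW, hlt'⟩ :=
          exists_lt_of_lt_worstCaseExpectation (hP t y) (Wass_hamming_self_le (hP t y) hδ) hlt
        exact ⟨q, hq, fun _ _ => ⟨hW, hlt'⟩⟩
      · exact ⟨P t y, hP t y, fun hyU hyE => absurd ⟨hyU, hyE⟩ hy⟩
    choose R hR hRW using hrow
    refine ⟨Function.update Q₀ t R, hQ₀.update hR fun y hyU hyE => (hRW y hyU hyE).1,
      fun y => ?_⟩
    by_cases hyU : y ∈ U
    · rw [robustHitProb_of_mem_U hP hδ hyU, hitProbAux_of_mem_U _ _ hyU]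
      linarith
    by_cases hyE : y ∈ E
    · rw [robustHitProb_of_mem_E hP hδ hyU hyE, hitProbAux_of_mem_E _ _ hyU hyE]
      linarith
    linarith [(hRW y hyU hyE).2,
      sum_mul_robustHitProb_sub_le_hitProbAux_update (hR y) hopt hyU hyE]

lemma worstCaseExpectation_le_robustHitProb_succ (hP : ∀ k y, IsProbVec (P k y))
    (hδ : 0 ≤ δ) {n t : ℕ} {x : X} (hxU : x ∉ U) (hxE : x ∉ E) :
    worstCaseExpectation hamming (P t x) δ (robustHitProb U E P δ n (t + 1)) ≤
      robustHitProb U E P δ (n + 1) t x := by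
  refine csSup_le ⟨_, P t x, hP t x, Wass_hamming_self_le (hP t x) hδ, rfl⟩ ?_
  rintro _ ⟨q, hq, hW, rfl⟩
  refine le_of_forall_pos_le_add fun ε hε => ?_
  obtain ⟨Q₀, hQ₀, hopt⟩ := exists_isAdmissibleKernel_robustHitProb_sub_le hP hδ n (t + 1) hε
  set R := Function.update (P t) x q
  have hRx : R x = q := Function.update_self ..
  have hR : IsAdmissibleKernel U E P δ (Function.update Q₀ t R) := by
    refine hQ₀.update (fun y => ?_) (fun y hyU hyE => ?_) <;> rcases eq_or_ne y x with rfl | hy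
    · simpa [R] using hq
    · simpa [R, hy] using hP t y
    · simpa [R] using hW
    · simpa [R, hy] using Wass_hamming_self_le (hP t y) hδ
  have hglue := sum_mul_robustHitProb_sub_le_hitProbAux_update (hRx ▸ hq) hopt hxU hxE
  rw [hRx] at hglue
  linarith [hitProbAux_le_robustHitProb hR (n + 1) t x]

theorem robustHitProb_succ (hP : ∀ k y, IsProbVec (P k y)) (hδ : 0 ≤ δ) {n t : ℕ} {x : X}
    (hxU : x ∉ U) (hxE : x ∉ E) :
    robustHitProb U E P δ (n + 1) t x =
      worstCaseExpectation hamming (P t x) δ (robustHitProb U E P δ n (t + 1)) :=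
  le_antisymm (robustHitProb_succ_le hP hδ hxU hxE)
    (worstCaseExpectation_le_robustHitProb_succ hP hδ hxU hxE)

end Chain

end RobustSafety

open RobustSafety in
theorem robust_safety_dual_recursion_general
    {X : Type*} [Fintype X] [DecidableEq X] [Nonempty X]
    (U E : Finset X)
    (Tmax : ℕ) (P : ℕ → X → X → ℝ) (hP : ∀ k y, IsProbVec (P k y))
    (δ : ℝ) (hδ : 0 ≤ δ)
    (t : ℕ) (ht : t < Tmax) (x : X) (hxU : x ∉ U) (hxE : x ∉ E) :
    robustSafety U E P δ Tmax t x =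
      sInf {s | ∃ lam : ℝ, 0 ≤ lam ∧
        s = lam * δ +
          ∑ y, (Finset.univ.sup' Finset.univ_nonempty fun l =>
              -lam * hamming l y + (if l ∈ U then (1 : ℝ) else 0) +
                (if l ∈ U ∨ l ∈ E then 0 else robustSafety U E P δ Tmax (t + 1) l)) *
            P t x y} := by
  set n := Tmax - (t + 1)
  have hnext : ∀ (lam : ℝ) (l y : X), -lam * hamming l y + (if l ∈ U then (1 : ℝ) else 0) +
      (if l ∈ U ∨ l ∈ E then 0 else robustSafety U E P δ Tmax (t + 1) l) =
      -lam * hamming l y + robustHitProb U E P δ n (t + 1) l := by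
    intro lam l y
    rw [add_assoc]
    congr 1
    by_cases hlU : l ∈ U
    · simp [hlU, robustHitProb_of_mem_U hP hδ hlU]
    by_cases hlE : l ∈ E
    · simp [hlU, hlE, robustHitProb_of_mem_E hP hδ hlU hlE]
    · simp [hlU, hlE, robustSafety_eq_robustHitProb, n]
  simp only [hnext]
  rw [robustSafety_eq_robustHitProb, show Tmax - t = n + 1 by omega,
    robustHitProb_succ hP hδ hxU hxE, worstCaseExpectation_hamming_eq_sInf (hP t x) hδ]
  rfl

/-- Dual form of the robust safety function recursion (Lemma 4). -/
theorem robust_safety_dual_recursion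
    {X : Type*} [Fintype X] [DecidableEq X] [Nonempty X]
    (U E : Finset X) (hUE : Disjoint U E)
    (Tmax : ℕ) (P : ℕ → X → X → ℝ) (hP : ∀ k y, IsProbVec (P k y))
    (δ : ℝ) (hδ : 0 ≤ δ)
    (t : ℕ) (ht : t < Tmax) (x : X) (hxU : x ∉ U) (hxE : x ∉ E) :
    robustSafety U E P δ Tmax t x =
      sInf {s | ∃ lam : ℝ, 0 ≤ lam ∧
        s = lam * δ +
          ∑ y, (Finset.univ.sup' Finset.univ_nonempty fun l =>
              -lam * hamming l y + (if l ∈ U then (1 : ℝ) else 0) +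
                (if l ∈ U ∨ l ∈ E then 0 else robustSafety U E P δ Tmax (t + 1) l)) *
            P t x y} :=
  robust_safety_dual_recursion_general U E Tmax P hP δ hδ t ht x hxU hxE
end

section
/- Monotonicity of the robust value in the ambiguity radius and center inclusion: let X be a finite set, d a metric on X, v : X → ℝ, and P̄, P̂ probability vectors on X. If the Wasserstein ball of radius δ around P̄ is contained in the Wasserstein ball of radius δ' around P̂, then sup_{Q : W(Q,P̄) ≤ δ} Σ_{y∈X} v(y) Q(y) ≤ inf over λ ≥ 0 of [ λ δ' + Σ_{y∈X} ( max_{l∈X} ( −λ d(l,y) + v(l) ) ) P̂(y) ]. -/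
open Finset

/-!
Weak duality. A distribution `Q` in the `δ`-ball around `P̄` lies in the `δ'`-ball around `P̂`.
For `λ ≥ 0` put `M(z) = max_l (v(l) - λ d(l,z))`, so that `v(y) ≤ λ d(y,z) + M(z)` for all `y, z`.
Integrating this against any coupling `Γ` of `Q` and `P̂` gives
`∑ v Q ≤ λ · cost(Γ) + ∑ M P̂`, and the infimum over `Γ` turns the cost into `W(Q,P̂) ≤ δ'`.
Since `W(P̄,P̄) = 0 ≤ δ`, the supremum is over a nonempty set, so `sSup` is not the junk value of `∅`.
-/

section Coupling

variable {X : Type*} [Fintype X]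

theorem IsCoupling.sum_mul_fst {μ ν : X → ℝ} {Γ : X × X → ℝ} (hΓ : IsCoupling μ ν Γ)
    (f : X → ℝ) : ∑ p, Γ p * f p.1 = ∑ y, f y * μ y := by
  simp only [Fintype.sum_prod_type, ← hΓ.2.1, mul_sum, mul_comm]

theorem IsCoupling.sum_mul_snd {μ ν : X → ℝ} {Γ : X × X → ℝ} (hΓ : IsCoupling μ ν Γ)
    (f : X → ℝ) : ∑ p, Γ p * f p.2 = ∑ z, f z * ν z := by
  rw [Fintype.sum_prod_type, sum_comm]
  simp only [← hΓ.2.2, mul_sum, mul_comm]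

theorem isCoupling_prod {μ ν : X → ℝ} (hμ : IsProbVec μ) (hν : IsProbVec ν) :
    IsCoupling μ ν (fun p => μ p.1 * ν p.2) :=
  ⟨fun p => mul_nonneg (hμ.1 _) (hν.1 _), fun y => by simp [← mul_sum, hν.2],
    fun z => by simp [← sum_mul, hμ.2]⟩

theorem isCoupling_diag [DecidableEq X] {μ : X → ℝ} (hμ : ∀ x, 0 ≤ μ x) :
    IsCoupling μ μ (fun p => if p.1 = p.2 then μ p.1 else 0) :=
  ⟨fun p => by dsimp only; split_ifs <;> simp [hμ], fun y => by simp, fun z => by simp [eq_comm]⟩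

theorem IsCoupling.cost_nonneg {μ ν : X → ℝ} {Γ : X × X → ℝ} (hΓ : IsCoupling μ ν Γ)
    {d : X → X → ℝ} (hd : ∀ x y, 0 ≤ d x y) : 0 ≤ ∑ p, Γ p * d p.1 p.2 :=
  sum_nonneg fun p _ => mul_nonneg (hΓ.1 p) (hd _ _)

theorem wass_nonneg {d : X → X → ℝ} (hd : ∀ x y, 0 ≤ d x y) (μ ν : X → ℝ) :
    0 ≤ Wass d μ ν :=
  Real.sInf_nonneg <| by
    rintro _ ⟨Γ, hΓ, rfl⟩
    exact hΓ.cost_nonneg hd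

theorem wass_self {d : X → X → ℝ} (hd : ∀ x y, 0 ≤ d x y) (hd_self : ∀ x, d x x = 0)
    {μ : X → ℝ} (hμ : ∀ x, 0 ≤ μ x) : Wass d μ μ = 0 := by
  classical
  refine le_antisymm (csInf_le ⟨0, ?_⟩ ⟨_, isCoupling_diag hμ, ?_⟩) (wass_nonneg hd μ μ)
  · rintro _ ⟨Γ, hΓ, rfl⟩
    exact hΓ.cost_nonneg hd
  · refine (sum_eq_zero fun p _ => ?_).symm
    split_ifs with h
    · rw [h, hd_self, mul_zero]
    · rw [zero_mul]

end Coupling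

section Duality

variable {X : Type*} [Fintype X] [Nonempty X] (d : X → X → ℝ) (v : X → ℝ)

theorem le_mul_dist_add_sup' (lam : ℝ) (y z : X) :
    v y ≤ lam * d y z + univ.sup' univ_nonempty fun l => -lam * d l z + v l := by
  have := le_sup' (fun l => -lam * d l z + v l) (mem_univ y)
  linarith

theorem sum_mul_le_cost_add_sum_sup' {Q P : X → ℝ} {Γ : X × X → ℝ} (hΓ : IsCoupling Q P Γ)
    (lam : ℝ) :
    ∑ y, v y * Q y ≤ lam * ∑ p, Γ p * d p.1 p.2 +
      ∑ z, (univ.sup' univ_nonempty fun l => -lam * d l z + v l) * P z := by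
  calc ∑ y, v y * Q y = ∑ p, Γ p * v p.1 := (hΓ.sum_mul_fst v).symm
    _ ≤ ∑ p, Γ p * (lam * d p.1 p.2 +
          univ.sup' univ_nonempty fun l => -lam * d l p.2 + v l) :=
      sum_le_sum fun p _ => mul_le_mul_of_nonneg_left (le_mul_dist_add_sup' d v lam _ _) (hΓ.1 p)
    _ = _ := by
      rw [← hΓ.sum_mul_snd, mul_sum, ← sum_add_distrib]
      exact sum_congr rfl fun p _ => by ring

theorem sum_mul_le_mul_wass_add_sum_sup' {Q P : X → ℝ} (hQ : IsProbVec Q) (hP : IsProbVec P)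
    {lam : ℝ} (hlam : 0 ≤ lam) :
    ∑ y, v y * Q y ≤ lam * Wass d Q P +
      ∑ z, (univ.sup' univ_nonempty fun l => -lam * d l z + v l) * P z := by
  rw [Wass, ← smul_eq_mul, ← Real.sInf_smul_of_nonneg hlam, ← sub_le_iff_le_add]
  refine le_csInf (Set.Nonempty.smul_set ⟨_, _, isCoupling_prod hQ hP, rfl⟩) ?_
  rintro _ ⟨_, ⟨Γ, hΓ, rfl⟩, rfl⟩
  rw [sub_le_iff_le_add]
  exact sum_mul_le_cost_add_sum_sup' d v hΓ lam

end Duality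

theorem robust_value_mono_of_ball_subset_general
    {X : Type*} [Fintype X] [Nonempty X]
    (d : X → X → ℝ) (hd : IsMetricOn d)
    (v : X → ℝ) (Pbar Phat : X → ℝ) (hPbar : IsProbVec Pbar) (hPhat : IsProbVec Phat)
    (δ δ' : ℝ) (hδ : 0 ≤ δ)
    (hsub : {Q : X → ℝ | IsProbVec Q ∧ Wass d Q Pbar ≤ δ} ⊆
      {Q : X → ℝ | IsProbVec Q ∧ Wass d Q Phat ≤ δ'}) :
    sSup {s | ∃ Q : X → ℝ, IsProbVec Q ∧ Wass d Q Pbar ≤ δ ∧ s = ∑ y, v y * Q y} ≤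
      sInf {s | ∃ lam : ℝ, 0 ≤ lam ∧
        s = lam * δ' +
          ∑ y, (Finset.univ.sup' Finset.univ_nonempty fun l => -lam * d l y + v l) * Phat y} := by
  have hPbar_mem : Wass d Pbar Pbar ≤ δ := by
    rwa [wass_self hd.1 (fun x => (hd.2.1 x x).2 rfl) hPbar.1]
  refine csSup_le ⟨_, Pbar, hPbar, hPbar_mem, rfl⟩ ?_
  rintro _ ⟨Q, hQ, hQ_mem, rfl⟩
  refine le_csInf ⟨_, 0, le_rfl, rfl⟩ ?_
  rintro _ ⟨lam, hlam, rfl⟩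
  obtain ⟨-, hQ_mem'⟩ := hsub ⟨hQ, hQ_mem⟩
  calc ∑ y, v y * Q y
      ≤ lam * Wass d Q Phat +
          ∑ z, (univ.sup' univ_nonempty fun l => -lam * d l z + v l) * Phat z :=
        sum_mul_le_mul_wass_add_sum_sup' d v hQ hPhat hlam
    _ ≤ _ := by gcongr

/-- Monotonicity of the robust value under ambiguity-set inclusion: the robust value over a
Wasserstein ball around `Pbar` is bounded by the dual value at the larger ball around `Phat`. -/
theorem robust_value_mono_of_ball_subset
    {X : Type*} [Fintype X] [Nonempty X]
    (d : X → X → ℝ) (hd : IsMetricOn d)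
    (v : X → ℝ) (Pbar Phat : X → ℝ) (hPbar : IsProbVec Pbar) (hPhat : IsProbVec Phat)
    (δ δ' : ℝ) (hδ : 0 ≤ δ) (hδ' : 0 ≤ δ')
    (hsub : {Q : X → ℝ | IsProbVec Q ∧ Wass d Q Pbar ≤ δ} ⊆
      {Q : X → ℝ | IsProbVec Q ∧ Wass d Q Phat ≤ δ'}) :
    sSup {s | ∃ Q : X → ℝ, IsProbVec Q ∧ Wass d Q Pbar ≤ δ ∧ s = ∑ y, v y * Q y} ≤
      sInf {s | ∃ lam : ℝ, 0 ≤ lam ∧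
        s = lam * δ' +
          ∑ y, (Finset.univ.sup' Finset.univ_nonempty fun l => -lam * d l y + v l) * Phat y} :=
  robust_value_mono_of_ball_subset_general d hd v Pbar Phat hPbar hPhat δ δ' hδ hsub
end
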